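/- arXiv:2511.07867 — 3 statements merged into one kernel-verified Lean document; each statement's English description precedes it below -/
import Mathlib

section
/- Let (X, ≪, ≤, d, τ) be a globally hyperbolic Lorentzian length space. If X is finitely compact, then X is timelike Cauchy complete. -/
open Set Filter Topology
open scoped ENNReal NNReal

noncomputable section

/-- A Lorentzian pre-length space structure on a metric space `X`:
relations `chron` (≪) and `causal` (≤) and a time separation function `tau`. -/
structure LorentzianPreLength (X : Type*) [MetricSpace X] where
  chron : X → X → Prop
  causal : X → X → Prop
  chron_trans : ∀ {x y z : X}, chron x y → chron y z → chron x z
  causal_refl : ∀ x : X, causal x x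
  causal_trans : ∀ {x y z : X}, causal x y → causal y z → causal x z
  chron_imp_causal : ∀ {x y : X}, chron x y → causal x y
  tau : X → X → ℝ≥0∞
  tau_lsc : LowerSemicontinuous fun p : X × X => tau p.1 p.2
  tau_rev_triangle : ∀ {x y z : X}, causal x y → causal y z → tau x y + tau y z ≤ tau x z
  tau_pos_iff : ∀ x y : X, 0 < tau x y ↔ chron x y
  tau_eq_zero_of_not_causal : ∀ x y : X, ¬ causal x y → tau x y = 0

namespace LorentzianPreLength

variable {X : Type*} [MetricSpace X] (S : LorentzianPreLength X)

/-- `x < y`, i.e. `x ≤ y` and `x ≠ y`. -/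
def strictCausal (x y : X) : Prop := S.causal x y ∧ x ≠ y

/-- Locally Lipschitz on a set. -/
def LocLipOn (γ : ℝ → X) (I : Set ℝ) : Prop :=
  ∀ t ∈ I, ∃ K : ℝ≥0, ∃ U ∈ 𝓝[I] t, LipschitzOnWith K γ U

/-- Future-directed causal curve defined on the interval `I`. -/
def IsCausalCurveOn (γ : ℝ → X) (I : Set ℝ) : Prop :=
  I.OrdConnected ∧ (∃ s ∈ I, ∃ t ∈ I, γ s ≠ γ t) ∧ LocLipOn γ I ∧
    ∀ ⦃s⦄, s ∈ I → ∀ ⦃t⦄, t ∈ I → s < t → S.causal (γ s) (γ t)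

/-- Future-directed timelike curve defined on the interval `I`. -/
def IsTimelikeCurveOn (γ : ℝ → X) (I : Set ℝ) : Prop :=
  I.OrdConnected ∧ (∃ s ∈ I, ∃ t ∈ I, γ s ≠ γ t) ∧ LocLipOn γ I ∧
    ∀ ⦃s⦄, s ∈ I → ∀ ⦃t⦄, t ∈ I → s < t → S.chron (γ s) (γ t)

/-- Past-directed causal curve defined on the interval `I`. -/
def IsPastCausalCurveOn (γ : ℝ → X) (I : Set ℝ) : Prop :=
  I.OrdConnected ∧ (∃ s ∈ I, ∃ t ∈ I, γ s ≠ γ t) ∧ LocLipOn γ I ∧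
    ∀ ⦃s⦄, s ∈ I → ∀ ⦃t⦄, t ∈ I → s < t → S.causal (γ t) (γ s)

/-- τ-length of a future-directed causal curve on `[a,b]`. -/
def tauLength (γ : ℝ → X) (a b : ℝ) : ℝ≥0∞ :=
  ⨅ (n : ℕ) (t : Fin (n + 1) → ℝ) (_ : StrictMono t) (_ : t 0 = a)
    (_ : t (Fin.last n) = b), ∑ i : Fin n, S.tau (γ (t i.castSucc)) (γ (t i.succ))

/-- τ-length of a past-directed causal curve on `[a,b]`. -/
def tauLengthPast (γ : ℝ → X) (a b : ℝ) : ℝ≥0∞ :=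
  ⨅ (n : ℕ) (t : Fin (n + 1) → ℝ) (_ : StrictMono t) (_ : t 0 = a)
    (_ : t (Fin.last n) = b), ∑ i : Fin n, S.tau (γ (t i.succ)) (γ (t i.castSucc))

/-- d-length of a curve on `[a,b]`. -/
def dLength (γ : ℝ → X) (a b : ℝ) : ℝ≥0∞ :=
  ⨆ (n : ℕ) (t : Fin (n + 1) → ℝ) (_ : StrictMono t) (_ : t 0 = a)
    (_ : t (Fin.last n) = b), ∑ i : Fin n, edist (γ (t i.castSucc)) (γ (t i.succ))

/-- Future-directed causal geodesic: every parameter has a compact subinterval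
neighborhood on which the curve is maximal. -/
def IsGeodesicOn (γ : ℝ → X) (I : Set ℝ) : Prop :=
  S.IsCausalCurveOn γ I ∧ ∀ t ∈ I, ∃ a b : ℝ, a < b ∧ Icc a b ⊆ I ∧ Icc a b ∈ 𝓝[I] t ∧
    S.tauLength γ a b = S.tau (γ a) (γ b)

/-- Past-directed causal geodesic. -/
def IsPastGeodesicOn (γ : ℝ → X) (I : Set ℝ) : Prop :=
  S.IsPastCausalCurveOn γ I ∧ ∀ t ∈ I, ∃ a b : ℝ, a < b ∧ Icc a b ⊆ I ∧ Icc a b ∈ 𝓝[I] t ∧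
    S.tauLengthPast γ a b = S.tau (γ b) (γ a)

/-- `p` and `q` are joined by a future-directed causal curve contained in `U`. -/
def CausallyJoinedIn (U : Set X) (p q : X) : Prop :=
  ∃ (γ : ℝ → X) (a b : ℝ), a < b ∧ S.IsCausalCurveOn γ (Icc a b) ∧
    (∀ t ∈ Icc a b, γ t ∈ U) ∧ γ a = p ∧ γ b = q

def CausallyPathConnected : Prop :=
  (∀ x y : X, S.chron x y → ∃ (γ : ℝ → X) (a b : ℝ), a < b ∧
      S.IsTimelikeCurveOn γ (Icc a b) ∧ γ a = x ∧ γ b = y) ∧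
  (∀ x y : X, S.strictCausal x y → ∃ (γ : ℝ → X) (a b : ℝ), a < b ∧
      S.IsCausalCurveOn γ (Icc a b) ∧ γ a = x ∧ γ b = y)

def LocallyWeaklyCausallyClosed : Prop :=
  ∀ x : X, ∃ U ∈ 𝓝 x, ∀ (p q : X) (pn qn : ℕ → X),
    (∀ n, pn n ∈ U) → (∀ n, qn n ∈ U) → p ∈ U → q ∈ U →
    Tendsto pn atTop (𝓝 p) → Tendsto qn atTop (𝓝 q) →
    (∀ n, S.CausallyJoinedIn U (pn n) (qn n)) →
    p = q ∨ S.CausallyJoinedIn U p q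

def Localizable : Prop :=
  ∀ x : X, ∃ Ω : Set X, IsOpen Ω ∧ x ∈ Ω ∧
    (∃ C : ℝ, 0 < C ∧ ∀ (γ : ℝ → X) (a b : ℝ), a < b → S.IsCausalCurveOn γ (Icc a b) →
      (∀ t ∈ Icc a b, γ t ∈ Ω) → dLength γ a b ≤ ENNReal.ofReal C) ∧
    (∃ ω : X → X → ℝ≥0∞,
      ContinuousOn (fun p : X × X => ω p.1 p.2) (Ω ×ˢ Ω) ∧
      (∀ p ∈ Ω, ∀ q ∈ Ω, ω p q ≠ ⊤) ∧
      (∀ p ∈ Ω, ∀ q ∈ Ω, ∀ r ∈ Ω, S.causal p q → S.causal q r → ω p q + ω q r ≤ ω p r) ∧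
      (∀ p ∈ Ω, ∀ q ∈ Ω, (0 < ω p q ↔ S.chron p q)) ∧
      (∀ p ∈ Ω, ∀ q ∈ Ω, ¬ S.causal p q → ω p q = 0) ∧
      (∀ y ∈ Ω, (∃ z ∈ Ω, S.chron y z) ∧ (∃ z ∈ Ω, S.chron z y)) ∧
      (∀ p ∈ Ω, ∀ q ∈ Ω, S.strictCausal p q →
        ∃ (γ : ℝ → X) (a b : ℝ), a < b ∧ S.IsCausalCurveOn γ (Icc a b) ∧
          γ a = p ∧ γ b = q ∧
          (∀ (lam : ℝ → X) (c d : ℝ), c < d → S.IsCausalCurveOn lam (Icc c d) →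
            (∀ t ∈ Icc c d, lam t ∈ Ω) → lam c = p → lam d = q →
            S.tauLength lam c d ≤ S.tauLength γ a b) ∧
          S.tauLength γ a b = ω p q ∧ ω p q ≤ S.tau p q))

/-- τ is the supremum of τ-lengths of connecting causal curves (0 if there are none). -/
def IsLengthLike : Prop :=
  ∀ x y : X, S.tau x y = ⨆ (γ : ℝ → X) (a : ℝ) (b : ℝ) (_ : a < b)
    (_ : S.IsCausalCurveOn γ (Icc a b)) (_ : γ a = x) (_ : γ b = y), S.tauLength γ a b

/-- Lorentzian length space. -/
def IsLorentzianLengthSpace : Prop :=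
  S.CausallyPathConnected ∧ S.LocallyWeaklyCausallyClosed ∧ S.Localizable ∧ S.IsLengthLike

def NonTotallyImprisoning : Prop :=
  ∀ K : Set X, IsCompact K → ∃ C : ℝ, 0 < C ∧
    ∀ (γ : ℝ → X) (a b : ℝ), a < b → S.IsCausalCurveOn γ (Icc a b) →
      (∀ t ∈ Icc a b, γ t ∈ K) → dLength γ a b ≤ ENNReal.ofReal C

def GloballyHyperbolic : Prop :=
  S.NonTotallyImprisoning ∧ ∀ x y : X, IsCompact {z : X | S.causal x z ∧ S.causal z y}

def FinitelyCompact : Prop :=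
  ∀ B : ℝ, 0 < B → ∀ p q : X, ∀ x : ℕ → X,
    ((∀ n, S.chron p q ∧ S.causal q (x n) ∧ S.tau p (x n) ≤ ENNReal.ofReal B) →
      ∃ z : X, MapClusterPt z atTop x) ∧
    ((∀ n, S.causal (x n) q ∧ S.chron q p ∧ S.tau (x n) p ≤ ENNReal.ofReal B) →
      ∃ z : X, MapClusterPt z atTop x)

def TimelikeCauchyComplete : Prop :=
  ∀ (x : ℕ → X) (B : ℕ → ℝ), (∀ n, 0 ≤ B n) → Tendsto B atTop (𝓝 0) →
    (((∀ n, S.chron (x n) (x (n + 1))) ∧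
        ∀ n m : ℕ, 0 < m → S.tau (x n) (x (n + m)) ≤ ENNReal.ofReal (B n)) ∨
      ((∀ n, S.chron (x (n + 1)) (x n)) ∧
        ∀ n m : ℕ, 0 < m → S.tau (x (n + m)) (x n) ≤ ENNReal.ofReal (B n))) →
    ∃ l : X, Tendsto x atTop (𝓝 l)

/-- A future-directed causal curve defined on `[0,c)` (where `c ∈ (0,∞]`) is future
extendible if it extends to a future-directed causal curve on `[0,c]`. -/
def FutureExtendibleFrom (γ : ℝ → X) (c : ℝ≥0∞) : Prop :=
  c ≠ ⊤ ∧ ∃ γ' : ℝ → X, S.IsCausalCurveOn γ' (Icc 0 c.toReal) ∧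
    ∀ t : ℝ, 0 ≤ t → ENNReal.ofReal t < c → γ' t = γ t

def PastExtendibleFrom (γ : ℝ → X) (c : ℝ≥0∞) : Prop :=
  c ≠ ⊤ ∧ ∃ γ' : ℝ → X, S.IsPastCausalCurveOn γ' (Icc 0 c.toReal) ∧
    ∀ t : ℝ, 0 ≤ t → ENNReal.ofReal t < c → γ' t = γ t

/-- Condition A. The domain `{t | 0 ≤ t ∧ ofReal t < c}` is `[0,c)`, and
`comap ENNReal.ofReal (𝓝[<] c)` is the filter of `t → c` from below
(`atTop` when `c = ∞`). -/
def ConditionA : Prop :=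
  (∀ x y : X, S.chron x y → ∀ c : ℝ≥0∞, 0 < c → ∀ γ : ℝ → X,
    S.IsGeodesicOn γ {t : ℝ | 0 ≤ t ∧ ENNReal.ofReal t < c} → γ 0 = y →
    ¬ S.FutureExtendibleFrom γ c →
    Tendsto (fun t : ℝ => S.tau x (γ t)) (comap ENNReal.ofReal (𝓝[<] c)) (𝓝 ⊤)) ∧
  (∀ x y : X, S.chron y x → ∀ c : ℝ≥0∞, 0 < c → ∀ γ : ℝ → X,
    S.IsPastGeodesicOn γ {t : ℝ | 0 ≤ t ∧ ENNReal.ofReal t < c} → γ 0 = y →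
    ¬ S.PastExtendibleFrom γ c →
    Tendsto (fun t : ℝ => S.tau (γ t) x) (comap ENNReal.ofReal (𝓝[<] c)) (𝓝 ⊤))

end LorentzianPreLength


/-!
The sequence is a chain `x₀ ≪ x₁ ≪ ⋯` (or its time dual) with `τ(x₀, xₙ)` bounded, so finite
compactness gives it a cluster point `z`. Localizability puts `z` in the interior of a causal
diamond `J(u, v)`, which then contains a tail of the sequence and is compact by global
hyperbolicity. On `J(u, v)` the causal relation is closed: connecting causal paths have uniformly
bounded variation (non-total imprisonment), so they split into finitely many pieces of small
diameter, each of which is handled by local weak causal closedness. The causal relation is also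
antisymmetric, since a causal loop through `p` could be traversed arbitrarily often inside the
compact set `J(p, p)`. A monotone sequence for such an order has a single cluster point in the
compact diamond, hence converges to `z`.
-/

theorem LipschitzOnWith.Icc_trans {X : Type*} [PseudoMetricSpace X] {f : ℝ → X} {K : ℝ≥0}
    {a b c : ℝ} (hab : LipschitzOnWith K f (Icc a b)) (hbc : LipschitzOnWith K f (Icc b c)) :
    LipschitzOnWith K f (Icc a c) := by
  refine LipschitzOnWith.of_dist_le_mul fun x hx y hy => ?_
  wlog hxy : x ≤ y generalizing x y
  · rw [dist_comm, dist_comm x]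
    exact this y hy x hx (le_of_not_ge hxy)
  rcases le_total y b with hyb | hby
  · exact hab.dist_le_mul x ⟨hx.1, hxy.trans hyb⟩ y ⟨hy.1, hyb⟩
  rcases le_total b x with hbx | hxb
  · exact hbc.dist_le_mul x ⟨hbx, hx.2⟩ y ⟨hby, hy.2⟩
  calc dist (f x) (f y) ≤ dist (f x) (f b) + dist (f b) (f y) := dist_triangle _ _ _
    _ ≤ K * dist x b + K * dist b y :=
        add_le_add (hab.dist_le_mul x ⟨hx.1, hxb⟩ b ⟨hx.1.trans hxb, le_rfl⟩)
          (hbc.dist_le_mul b ⟨le_rfl, hby.trans hy.2⟩ y ⟨hby, hy.2⟩)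
    _ = K * dist x y := by
        rw [Real.dist_eq, Real.dist_eq, Real.dist_eq, abs_of_nonpos (sub_nonpos.2 hxb),
          abs_of_nonpos (sub_nonpos.2 hby), abs_of_nonpos (sub_nonpos.2 hxy)]
        ring

theorem eVariationOn_Icc_add_Icc {E : Type*} [PseudoEMetricSpace E] (f : ℝ → E) {a b c : ℝ}
    (hab : a ≤ b) (hbc : b ≤ c) :
    eVariationOn f (Icc a b) + eVariationOn f (Icc b c) = eVariationOn f (Icc a c) := by
  simpa using eVariationOn.Icc_add_Icc f hab hbc (mem_univ b)

theorem edist_add_eVariationOn_Icc_le {E : Type*} [PseudoEMetricSpace E] (f : ℝ → E)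
    {a b c : ℝ} (hac : a ≤ c) (hcb : c ≤ b) :
    edist (f a) (f c) + eVariationOn f (Icc c b) ≤ eVariationOn f (Icc a b) :=
  eVariationOn_Icc_add_Icc f hac hcb ▸
    add_le_add_left (eVariationOn.edist_le f (left_mem_Icc.2 hac) (right_mem_Icc.2 hac)) _

theorem exists_mapsTo_closedBall_of_continuousOn {X : Type*} [PseudoMetricSpace X] {γ : ℝ → X}
    {a b ρ : ℝ} (hγ : ContinuousOn γ (Icc a b)) (hab : a ≤ b) (hρ : 0 ≤ ρ) :
    ∃ c ∈ Icc a b, MapsTo γ (Icc a c) (Metric.closedBall (γ a) ρ) ∧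
      (c = b ∨ dist (γ c) (γ a) = ρ) := by
  by_cases hall : MapsTo γ (Icc a b) (Metric.closedBall (γ a) ρ)
  · exact ⟨b, right_mem_Icc.2 hab, hall, Or.inl rfl⟩
  -- `c` is the first time at which `γ` reaches distance `ρ` from `γ a`.
  set f : ℝ → ℝ := fun t => dist (γ t) (γ a)
  have hf : ContinuousOn f (Icc a b) :=
    (continuous_id.dist continuous_const).comp_continuousOn hγ
  set E := Icc a b ∩ f ⁻¹' Ici ρ
  have hEne : E.Nonempty := by
    obtain ⟨t, ht, hfar⟩ := not_forall₂.1 hall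
    exact ⟨t, ht, show ρ ≤ f t from (lt_of_not_ge hfar).le⟩
  have hEbdd : BddBelow E := bddBelow_Icc.mono inter_subset_left
  set c := sInf E
  have hcE : c ∈ E :=
    (hf.preimage_isClosed_of_isClosed isClosed_Icc isClosed_Ici).csInf_mem hEne hEbdd
  have hcb : Icc a c ⊆ Icc a b := Icc_subset_Icc_right hcE.1.2
  have hbefore : ∀ t ∈ Ico a c, f t ≤ ρ := fun t ht =>
    le_of_not_ge fun hρt => ht.2.not_ge (csInf_le hEbdd ⟨⟨ht.1, ht.2.le.trans hcE.1.2⟩, hρt⟩)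
  have hmaps : MapsTo γ (Icc a c) (Metric.closedBall (γ a) ρ) := by
    rcases hcE.1.1.eq_or_lt with hac | hac
    · intro t ht
      rw [← hac, Icc_self, mem_singleton_iff] at ht
      simpa [ht] using hρ
    · intro t ht
      rw [← closure_Ico hac.ne] at ht
      rw [← closure_Ico hac.ne] at hcb
      exact le_on_closure hbefore (hf.mono hcb) continuousOn_const ht
  exact ⟨c, hcE.1, hmaps, Or.inr (le_antisymm (hmaps (right_mem_Icc.2 hcE.1.1)) hcE.2)⟩

theorem tendsto_of_mapClusterPt_of_forall_le {X : Type*} [TopologicalSpace X]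
    [FirstCountableTopology X] {R : X → X → Prop} (htrans : ∀ {x y z}, R x y → R y z → R x z)
    (hanti : ∀ {x y}, R x y → R y x → x = y) {u v z : X}
    (hK : IsCompact {y | R u y ∧ R y v}) (hnhds : ∀ᶠ y in 𝓝 z, R u y ∧ R y v)
    (hclosed : ∀ {pn qn : ℕ → X} {p q : X},
      (∀ᶠ i in atTop, R u (pn i) ∧ R (pn i) (qn i) ∧ R (qn i) v) →
      Tendsto pn atTop (𝓝 p) → Tendsto qn atTop (𝓝 q) → R p q)
    {x : ℕ → X} (hx : ∀ ⦃m n⦄, m ≤ n → R (x m) (x n)) (hz : MapClusterPt z atTop x) :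
    Tendsto x atTop (𝓝 z) := by
  have hfreq : ∀ N, ∃ n ≥ N, R u (x n) ∧ R (x n) v := frequently_atTop.1 (hz.frequently hnhds)
  have htail : ∀ᶠ n in atTop, R u (x n) ∧ R (x n) v := by
    obtain ⟨n₀, -, hn₀⟩ := hfreq 0
    filter_upwards [eventually_ge_atTop n₀] with n hn
    obtain ⟨m, hm, hmK⟩ := hfreq n
    exact ⟨htrans hn₀.1 (hx hn), htrans (hx hm) hmK.2⟩
  have hle : ∀ {a b}, MapClusterPt a atTop x → MapClusterPt b atTop x → R a b := by
    intro a b ha hb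
    obtain ⟨φ, hφ, hφa⟩ := ha.tendsto_subseq
    obtain ⟨ψ, hψ, hψb⟩ := hb.tendsto_subseq
    refine hclosed ?_ hφa (hψb.comp hφ.tendsto_atTop)
    filter_upwards [hφ.tendsto_atTop.eventually htail,
      (hψ.tendsto_atTop.comp hφ.tendsto_atTop).eventually htail] with i h₁ h₂
    exact ⟨h₁.1, hx (hψ.id_le _), h₂.2⟩
  exact hK.tendsto_nhds_of_unique_mapClusterPt htail fun y _ hy => hanti (hle hy hz) (hle hz hy)

namespace LorentzianPreLength

variable {X : Type*} [MetricSpace X] {S : LorentzianPreLength X}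

theorem eVariationOn_finset_le_dLength (γ : ℝ → X) {a b : ℝ} (F : Finset ℝ)
    (hF : ∀ t ∈ F, t ∈ Icc a b) (ha : a ∈ F) (hb : b ∈ F) :
    eVariationOn γ (F : Set ℝ) ≤ dLength γ a b := by
  -- The variation on a finite set is the sum along its increasing enumeration `e`.
  obtain ⟨k, hk⟩ : ∃ k, F.card = k + 1 := Nat.exists_eq_add_one.2 (Finset.card_pos.2 ⟨a, ha⟩)
  set e := F.orderEmbOfFin hk
  set v : ℕ → ℝ := fun i => e ⟨min i k, by omega⟩
  have hv : Monotone v := fun i j hij => e.monotone (Fin.mk_le_mk.2 (min_le_min_right k hij))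
  have hvF : v '' Iic k = F := by
    refine Subset.antisymm ?_ fun t ht => ?_
    · rintro _ ⟨i, -, rfl⟩
      exact F.orderEmbOfFin_mem hk _
    · rw [← F.range_orderEmbOfFin hk] at ht
      obtain ⟨j, rfl⟩ := ht
      exact ⟨j, Nat.lt_succ_iff.1 j.2, congr_arg e (Fin.ext (min_eq_left (Nat.lt_succ_iff.1 j.2)))⟩
  have he0 : e 0 = a := by
    obtain ⟨j, hj⟩ : a ∈ range e := by rwa [F.range_orderEmbOfFin hk]
    exact le_antisymm (hj ▸ e.monotone (Fin.zero_le j)) (hF _ (F.orderEmbOfFin_mem hk 0)).1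
  have hek : e (Fin.last k) = b := by
    obtain ⟨j, hj⟩ : b ∈ range e := by rwa [F.range_orderEmbOfFin hk]
    exact le_antisymm (hF _ (F.orderEmbOfFin_mem hk _)).2 (hj ▸ e.monotone (Fin.le_last j))
  calc eVariationOn γ (F : Set ℝ)
      = ∑ i ∈ Finset.range k, edist (γ (v i)) (γ (v (i + 1))) := by
        rw [← hvF, eVariationOn.image_range_of_monotone γ hv k]
    _ = ∑ i : Fin k, edist (γ (e i.castSucc)) (γ (e i.succ)) := by
        rw [← Fin.sum_univ_eq_sum_range (fun i => edist (γ (v i)) (γ (v (i + 1))))]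
        refine Finset.sum_congr rfl fun i _ => ?_
        simp only [v, min_eq_left i.2.le, min_eq_left (Nat.succ_le_of_lt i.2)]
        rfl
    _ ≤ dLength γ a b :=
        le_iSup_of_le k <| le_iSup_of_le e <| le_iSup_of_le e.strictMono <|
          le_iSup_of_le he0 <| le_iSup_of_le hek le_rfl

theorem eVariationOn_Icc_le_dLength (γ : ℝ → X) (a b : ℝ) :
    eVariationOn γ (Icc a b) ≤ dLength γ a b := by
  rcases lt_or_ge b a with hba | hab
  · simp [Icc_eq_empty_of_lt hba]
  refine iSup_le fun ⟨n, u, hu, hus⟩ => ?_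
  set F : Finset ℝ := insert a (insert b ((Finset.range (n + 1)).image u))
  have hF : ∀ t ∈ F, t ∈ Icc a b := by
    simp only [F, Finset.mem_insert, Finset.mem_image]
    rintro t (rfl | rfl | ⟨i, -, rfl⟩)
    exacts [left_mem_Icc.2 hab, right_mem_Icc.2 hab, hus i]
  calc ∑ i ∈ Finset.range n, edist (γ (u (i + 1))) (γ (u i))
      ≤ eVariationOn γ (u '' Iic n) :=
        eVariationOn.sum_le_of_monotoneOn_Iic (hu.monotoneOn _) fun i hi => mem_image_of_mem u hi
    _ ≤ eVariationOn γ (F : Set ℝ) := by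
        refine eVariationOn.mono γ ?_
        rintro _ ⟨i, hi, rfl⟩
        simp only [F, Finset.coe_insert, Finset.coe_image, Finset.coe_range]
        exact Or.inr (Or.inr ⟨i, Nat.lt_succ_iff.2 hi, rfl⟩)
    _ ≤ dLength γ a b := eVariationOn_finset_le_dLength γ F hF (by simp [F]) (by simp [F])

variable (S) in
/-- Like `S.IsCausalCurveOn γ (Icc a b)`, but possibly constant, and Lipschitz (which on a compact
interval is the same as locally Lipschitz). -/
structure IsCausalPath (γ : ℝ → X) (a b : ℝ) : Prop where
  le : a ≤ b
  lipschitzOnWith : ∃ K, LipschitzOnWith K γ (Icc a b)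
  causal_of_le : ∀ ⦃s⦄, s ∈ Icc a b → ∀ ⦃t⦄, t ∈ Icc a b → s ≤ t → S.causal (γ s) (γ t)

variable {γ : ℝ → X} {a b : ℝ}

namespace IsCausalPath

theorem continuousOn (h : S.IsCausalPath γ a b) : ContinuousOn γ (Icc a b) :=
  h.lipschitzOnWith.choose_spec.continuousOn

theorem edist_le_eVariationOn (h : S.IsCausalPath γ a b) :
    edist (γ a) (γ b) ≤ eVariationOn γ (Icc a b) :=
  eVariationOn.edist_le γ (left_mem_Icc.2 h.le) (right_mem_Icc.2 h.le)

theorem mono (h : S.IsCausalPath γ a b) {c d : ℝ} (hac : a ≤ c) (hcd : c ≤ d) (hdb : d ≤ b) :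
    S.IsCausalPath γ c d where
  le := hcd
  lipschitzOnWith := h.lipschitzOnWith.imp fun _ hK => hK.mono (Icc_subset_Icc hac hdb)
  causal_of_le _ hs _ ht := h.causal_of_le (Icc_subset_Icc hac hdb hs) (Icc_subset_Icc hac hdb ht)

theorem congr (h : S.IsCausalPath γ a b) {γ' : ℝ → X} (hγ : EqOn γ γ' (Icc a b)) :
    S.IsCausalPath γ' a b where
  le := h.le
  lipschitzOnWith := h.lipschitzOnWith.imp fun _ hK _ hx _ hy => hγ hx ▸ hγ hy ▸ hK hx hy
  causal_of_le _ hs _ ht hst := hγ hs ▸ hγ ht ▸ h.causal_of_le hs ht hst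

theorem comp_add_right (h : S.IsCausalPath γ a b) (c : ℝ) :
    S.IsCausalPath (fun t => γ (t + c)) (a - c) (b - c) where
  le := by linarith [h.le]
  lipschitzOnWith := by
    obtain ⟨K, hK⟩ := h.lipschitzOnWith
    refine ⟨K * 1, hK.comp (isometry_add_right c).lipschitz.lipschitzOnWith fun t ht => ?_⟩
    exact ⟨by linarith [ht.1], by linarith [ht.2]⟩
  causal_of_le s hs t ht hst := h.causal_of_le ⟨by linarith [hs.1], by linarith [hs.2]⟩
    ⟨by linarith [ht.1], by linarith [ht.2]⟩ (by linarith)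

theorem trans (h₁ : S.IsCausalPath γ a b) {c : ℝ} (h₂ : S.IsCausalPath γ b c) :
    S.IsCausalPath γ a c where
  le := h₁.le.trans h₂.le
  lipschitzOnWith := by
    obtain ⟨K₁, hK₁⟩ := h₁.lipschitzOnWith
    obtain ⟨K₂, hK₂⟩ := h₂.lipschitzOnWith
    exact ⟨max K₁ K₂, (hK₁.weaken (le_max_left _ _)).Icc_trans (hK₂.weaken (le_max_right _ _))⟩
  causal_of_le s hs t ht hst := by
    rcases le_total t b with htb | hbt
    · exact h₁.causal_of_le ⟨hs.1, hst.trans htb⟩ ⟨ht.1, htb⟩ hst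
    rcases le_total b s with hbs | hsb
    · exact h₂.causal_of_le ⟨hbs, hs.2⟩ ⟨hbt, ht.2⟩ hst
    exact S.causal_trans (h₁.causal_of_le ⟨hs.1, hsb⟩ (right_mem_Icc.2 h₁.le) hsb)
      (h₂.causal_of_le (left_mem_Icc.2 h₂.le) ⟨hbt, ht.2⟩ hbt)

theorem exists_append (h₁ : S.IsCausalPath γ a b) {γ' : ℝ → X} {c d : ℝ}
    (h₂ : S.IsCausalPath γ' c d) (hγ : γ b = γ' c) :
    ∃ (γ'' : ℝ → X) (e : ℝ), S.IsCausalPath γ'' a e ∧ γ'' a = γ a ∧ γ'' e = γ' d ∧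
      eVariationOn γ'' (Icc a e) = eVariationOn γ (Icc a b) + eVariationOn γ' (Icc c d) := by
  set γ'' : ℝ → X := fun t => if t ≤ b then γ t else γ' (t + (c - b))
  have h₁' : EqOn γ γ'' (Icc a b) := fun t ht => (if_pos ht.2).symm
  have h₂' : EqOn (fun t => γ' (t + (c - b))) γ'' (Icc b (d - (c - b))) := fun t ht => by
    rcases ht.1.eq_or_lt with rfl | hbt
    · simp [γ'', hγ]
    · exact (if_neg hbt.not_ge).symm
  have h₂'' : S.IsCausalPath (fun t => γ' (t + (c - b))) b (d - (c - b)) := by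
    simpa using h₂.comp_add_right (c - b)
  refine ⟨γ'', d - (c - b), (h₁.congr h₁').trans (h₂''.congr h₂'),
    (h₁' (left_mem_Icc.2 h₁.le)).symm, by simpa using (h₂' (right_mem_Icc.2 h₂''.le)).symm, ?_⟩
  rw [← eVariationOn_Icc_add_Icc γ'' h₁.le h₂''.le, ← eVariationOn.congr h₁',
    ← eVariationOn.congr h₂', ← Function.comp_def,
    eVariationOn.comp_eq_of_monotoneOn γ' _ fun _ _ _ _ h => by linarith, image_add_const_Icc,
    add_sub_cancel, sub_add_cancel]

end IsCausalPath

theorem isCausalPath_const (p : X) (a : ℝ) : S.IsCausalPath (fun _ => p) a a where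
  le := le_rfl
  lipschitzOnWith := ⟨0, LipschitzWith.const p |>.lipschitzOnWith⟩
  causal_of_le _ _ _ _ _ := S.causal_refl p

theorem IsCausalCurveOn.isCausalPath (h : S.IsCausalCurveOn γ (Icc a b)) :
    S.IsCausalPath γ a b where
  le := by
    obtain ⟨s, hs, -⟩ := h.2.1
    exact hs.1.trans hs.2
  lipschitzOnWith := LocallyLipschitzOn.exists_lipschitzOnWith_of_compact isCompact_Icc h.2.2.1
  causal_of_le s hs t ht hst := by
    rcases hst.eq_or_lt with rfl | hlt
    · exact S.causal_refl _
    · exact h.2.2.2 hs ht hlt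

theorem IsCausalPath.isCausalCurveOn (h : S.IsCausalPath γ a b)
    (hne : ∃ s ∈ Icc a b, ∃ t ∈ Icc a b, γ s ≠ γ t) : S.IsCausalCurveOn γ (Icc a b) := by
  obtain ⟨K, hK⟩ := h.lipschitzOnWith
  exact ⟨ordConnected_Icc, hne, fun _ _ => ⟨K, Icc a b, self_mem_nhdsWithin, hK⟩,
    fun s hs t ht hst => h.causal_of_le hs ht hst.le⟩

theorem IsCausalPath.mapsTo (h : S.IsCausalPath γ a b) {u v : X} (hu : S.causal u (γ a))
    (hv : S.causal (γ b) v) : MapsTo γ (Icc a b) {y | S.causal u y ∧ S.causal y v} :=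
  fun _ ht => ⟨S.causal_trans hu (h.causal_of_le (left_mem_Icc.2 h.le) ht ht.1),
    S.causal_trans (h.causal_of_le ht (right_mem_Icc.2 h.le) ht.2) hv⟩

theorem CausallyPathConnected.exists_isCausalPath (hpc : S.CausallyPathConnected) {p q : X}
    (h : S.causal p q) : ∃ γ a b, S.IsCausalPath γ a b ∧ γ a = p ∧ γ b = q := by
  rcases eq_or_ne p q with rfl | hne
  · exact ⟨fun _ => p, 0, 0, isCausalPath_const p 0, rfl, rfl⟩
  obtain ⟨γ, a, b, -, hγ, rfl, rfl⟩ := hpc.2 _ _ ⟨h, hne⟩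
  exact ⟨γ, a, b, hγ.isCausalPath, rfl, rfl⟩

theorem NonTotallyImprisoning.exists_eVariationOn_le (h : S.NonTotallyImprisoning) {K : Set X}
    (hK : IsCompact K) : ∃ C : ℝ, ∀ γ a b, S.IsCausalPath γ a b → MapsTo γ (Icc a b) K →
      eVariationOn γ (Icc a b) ≤ ENNReal.ofReal C := by
  obtain ⟨C, -, hC⟩ := h K hK
  refine ⟨C, fun γ a b hγ hγK => ?_⟩
  by_cases hne : ∃ s ∈ Icc a b, ∃ t ∈ Icc a b, γ s ≠ γ t
  · obtain ⟨s, hs, t, ht, hst⟩ := hne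
    have hab : a < b := by
      by_contra! hba
      exact hst (congr_arg γ (subsingleton_Icc_of_ge hba hs ht))
    exact (eVariationOn_Icc_le_dLength γ a b).trans
      (hC γ a b hab (hγ.isCausalCurveOn ⟨s, hs, t, ht, hst⟩) hγK)
  · push Not at hne
    rw [eVariationOn.constant_on]
    · exact zero_le
    · rintro _ ⟨s, hs, rfl⟩ _ ⟨t, ht, rfl⟩
      exact hne s hs t ht

theorem causal_antisymm (hpc : S.CausallyPathConnected) (hGH : S.GloballyHyperbolic) {p q : X}
    (hpq : S.causal p q) (hqp : S.causal q p) : p = q := by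
  by_contra hne
  obtain ⟨C, hC⟩ := hGH.1.exists_eVariationOn_le (hGH.2 p p)
  obtain ⟨α, a, b, hα, hαa, hαb⟩ := hpc.exists_isCausalPath hpq
  obtain ⟨β, c, d, hβ, hβc, hβd⟩ := hpc.exists_isCausalPath hqp
  obtain ⟨ℓ, e, hℓ, hℓa, hℓe, hℓvar⟩ := hα.exists_append hβ (hαb.trans hβc.symm)
  have hℓp : edist p q ≤ eVariationOn ℓ (Icc a e) := by
    rw [hℓvar, ← hαa, ← hαb]
    exact le_add_right hα.edist_le_eVariationOn
  have hiter : ∀ n : ℕ, ∃ γ a b, S.IsCausalPath γ a b ∧ γ a = p ∧ γ b = p ∧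
      n * edist p q ≤ eVariationOn γ (Icc a b) := by
    intro n
    induction n with
    | zero => exact ⟨fun _ => p, 0, 0, isCausalPath_const p 0, rfl, rfl, by simp⟩
    | succ n ih =>
      obtain ⟨γ, a', b', hγ, hγa, hγb, hγvar⟩ := ih
      obtain ⟨γ', e', hγ', h'a, h'e, h'var⟩ := hγ.exists_append hℓ (by rw [hγb, hℓa, hαa])
      refine ⟨γ', a', e', hγ', h'a.trans hγa, h'e.trans (hℓe.trans hβd), ?_⟩
      rw [h'var, Nat.cast_succ, add_one_mul]
      exact add_le_add hγvar hℓp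
  obtain ⟨n, hn⟩ := ENNReal.exists_nat_mul_gt (edist_pos.2 hne).ne' ENNReal.ofReal_ne_top
  obtain ⟨γ, a', b', hγ, hγa, hγb, hγvar⟩ := hiter n
  have hγK := hγ.mapsTo (u := p) (v := p) (hγa ▸ S.causal_refl p) (hγb ▸ S.causal_refl p)
  exact (hn.trans_le hγvar).not_ge (hC γ a' b' hγ hγK)

variable (S) in
/-- The condition on `U` in the definition of `LocallyWeaklyCausallyClosed`. -/
def WeaklyCausallyClosedOn (U : Set X) : Prop :=
  ∀ (p q : X) (pn qn : ℕ → X),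
    (∀ n, pn n ∈ U) → (∀ n, qn n ∈ U) → p ∈ U → q ∈ U →
    Tendsto pn atTop (𝓝 p) → Tendsto qn atTop (𝓝 q) →
    (∀ n, S.CausallyJoinedIn U (pn n) (qn n)) →
    p = q ∨ S.CausallyJoinedIn U p q

theorem CausallyJoinedIn.causal {U : Set X} {p q : X} (h : S.CausallyJoinedIn U p q) :
    S.causal p q := by
  obtain ⟨γ, a, b, hab, hγ, -, rfl, rfl⟩ := h
  exact hγ.2.2.2 (left_mem_Icc.2 hab.le) (right_mem_Icc.2 hab.le) hab

theorem WeaklyCausallyClosedOn.causal_of_tendsto {U : Set X} (hU : S.WeaklyCausallyClosedOn U)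
    {p q : X} (hp : p ∈ U) (hq : q ∈ U) {γ : ℕ → ℝ → X} {a b : ℕ → ℝ}
    (hγ : ∀ i, S.IsCausalPath (γ i) (a i) (b i))
    (hγU : ∀ᶠ i in atTop, MapsTo (γ i) (Icc (a i) (b i)) U)
    (hpa : Tendsto (fun i => γ i (a i)) atTop (𝓝 p))
    (hqb : Tendsto (fun i => γ i (b i)) atTop (𝓝 q)) : S.causal p q := by
  by_cases hconst : ∃ᶠ i in atTop, γ i (a i) = γ i (b i)
  · rw [tendsto_nhds_unique_of_frequently_eq hpa hqb hconst]
    exact S.causal_refl q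
  obtain ⟨N, hN⟩ := eventually_atTop.1 ((not_frequently.1 hconst).and hγU)
  have hjoin : ∀ i, S.CausallyJoinedIn U (γ (i + N) (a (i + N))) (γ (i + N) (b (i + N))) := by
    intro i
    obtain ⟨hne, hmaps⟩ := hN (i + N) (Nat.le_add_left N i)
    have hab : a (i + N) < b (i + N) :=
      (hγ _).le.lt_of_ne fun h => hne (congr_arg (γ (i + N)) h)
    exact ⟨γ (i + N), _, _, hab, (hγ _).isCausalCurveOn ⟨_, left_mem_Icc.2 hab.le, _,
      right_mem_Icc.2 hab.le, hne⟩, fun t ht => hmaps ht, rfl, rfl⟩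
  have hshift := tendsto_add_atTop_nat N
  rcases hU p q _ _ (fun i => (hN _ (Nat.le_add_left N i)).2 (left_mem_Icc.2 (hγ _).le))
      (fun i => (hN _ (Nat.le_add_left N i)).2 (right_mem_Icc.2 (hγ _).le)) hp hq
      (hpa.comp hshift) (hqb.comp hshift) hjoin with rfl | hpq
  · exact S.causal_refl p
  · exact hpq.causal

theorem LocallyWeaklyCausallyClosed.exists_radius (hwc : S.LocallyWeaklyCausallyClosed)
    {K : Set X} (hK : IsCompact K) : ∃ r > 0, ∀ y ∈ K, ∃ U,
      Metric.closedBall y r ⊆ U ∧ S.WeaklyCausallyClosedOn U := by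
  choose U hU hUc using hwc
  obtain ⟨δ, hδ, hball⟩ := lebesgue_number_lemma_of_metric hK (fun x => isOpen_interior)
    fun y _ => mem_iUnion.2 ⟨y, mem_interior_iff_mem_nhds.2 (hU y)⟩
  refine ⟨δ / 2, half_pos hδ, fun y hy => ?_⟩
  obtain ⟨x, hx⟩ := hball y hy
  exact ⟨U x, (Metric.closedBall_subset_ball (half_lt_self hδ)).trans
    (hx.trans interior_subset), hUc x⟩

/-- Induction on the number `m` of steps of variation `r / 2`: up to its first exit from the
`r / 2`-ball around its initial point, a path stays in a weakly causally closed set, and after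
that exit it has at most `m - 1` steps left. -/
theorem causal_of_tendsto_of_eVariationOn_le {K : Set X} (hK : IsCompact K) {r : ℝ}
    (hr : 0 < r) (hKU : ∀ y ∈ K, ∃ U, Metric.closedBall y r ⊆ U ∧ S.WeaklyCausallyClosedOn U)
    (m : ℕ) {γ : ℕ → ℝ → X} {a b : ℕ → ℝ} {p q : X} (hγ : ∀ i, S.IsCausalPath (γ i) (a i) (b i))
    (hγK : ∀ i, MapsTo (γ i) (Icc (a i) (b i)) K)
    (hvar : ∀ i, eVariationOn (γ i) (Icc (a i) (b i)) ≤ m * ENNReal.ofReal (r / 2))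
    (hp : Tendsto (fun i => γ i (a i)) atTop (𝓝 p))
    (hq : Tendsto (fun i => γ i (b i)) atTop (𝓝 q)) : S.causal p q := by
  induction m generalizing γ a b p with
  | zero =>
    have hab : ∀ i, γ i (a i) = γ i (b i) := fun i => edist_le_zero.1 <|
      (hγ i).edist_le_eVariationOn.trans (by simpa using hvar i)
    rw [tendsto_nhds_unique hp (hq.congr fun i => (hab i).symm)]
    exact S.causal_refl q
  | succ m ih =>
    obtain ⟨U, hpU, hU⟩ := hKU p <| hK.isClosed.mem_of_tendsto hp <|
      Eventually.of_forall fun i => hγK i (left_mem_Icc.2 (hγ i).le)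
    choose c hc hcball hcexit using fun i =>
      exists_mapsTo_closedBall_of_continuousOn (hγ i).continuousOn (hγ i).le (half_pos hr).le
    obtain ⟨y, -, φ, hφ, hy⟩ := hK.tendsto_subseq fun i => hγK i (hc i)
    have hy' : Tendsto (fun i => γ (φ i) (c (φ i))) atTop (𝓝 y) := hy
    have hpφ : Tendsto (fun i => γ (φ i) (a (φ i))) atTop (𝓝 p) := hp.comp hφ.tendsto_atTop
    have hball : ∀ᶠ i in atTop,
        MapsTo (γ (φ i)) (Icc (a (φ i)) (c (φ i))) (Metric.closedBall p r) := by
      filter_upwards [hpφ (Metric.closedBall_mem_nhds p (half_pos hr))] with i hi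
      refine (hcball (φ i)).mono_right (Metric.closedBall_subset_closedBall' ?_)
      linarith [Metric.mem_closedBall.1 hi]
    have hyU : y ∈ U := hpU <| Metric.isClosed_closedBall.mem_of_tendsto hy' <|
      hball.mono fun i hi => hi (right_mem_Icc.2 (hc _).1)
    have hpy : S.causal p y := hU.causal_of_tendsto (hpU (Metric.mem_closedBall_self hr.le)) hyU
      (fun i => (hγ (φ i)).mono le_rfl (hc _).1 (hc _).2)
      (hball.mono fun _ hi => hi.mono_right hpU) hpφ hy'
    have htail : ∀ i, eVariationOn (γ i) (Icc (c i) (b i)) ≤ m * ENNReal.ofReal (r / 2) := by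
      intro i
      rcases hcexit i with hcb | hdist
      · simp [hcb]
      refine ENNReal.le_of_add_le_add_left (ENNReal.ofReal_ne_top (r := r / 2)) ?_
      calc ENNReal.ofReal (r / 2) + eVariationOn (γ i) (Icc (c i) (b i))
          = edist (γ i (a i)) (γ i (c i)) + eVariationOn (γ i) (Icc (c i) (b i)) := by
            rw [edist_dist, dist_comm, hdist]
        _ ≤ eVariationOn (γ i) (Icc (a i) (b i)) :=
            edist_add_eVariationOn_Icc_le _ (hc i).1 (hc i).2
        _ ≤ ENNReal.ofReal (r / 2) + m * ENNReal.ofReal (r / 2) := by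
            rw [add_comm, ← add_one_mul]; exact_mod_cast hvar i
    exact S.causal_trans hpy <| ih (fun i => (hγ (φ i)).mono (hc _).1 (hc _).2 le_rfl)
      (fun i => (hγK (φ i)).mono_left (Icc_subset_Icc_left (hc _).1)) (fun i => htail (φ i)) hy'
      (hq.comp hφ.tendsto_atTop)

theorem causal_of_tendsto (hpc : S.CausallyPathConnected) (hwc : S.LocallyWeaklyCausallyClosed)
    (hGH : S.GloballyHyperbolic) {u v p q : X} {pn qn : ℕ → X}
    (h : ∀ᶠ i in atTop, S.causal u (pn i) ∧ S.causal (pn i) (qn i) ∧ S.causal (qn i) v)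
    (hp : Tendsto pn atTop (𝓝 p)) (hq : Tendsto qn atTop (𝓝 q)) : S.causal p q := by
  have hK := hGH.2 u v
  obtain ⟨C, hC⟩ := hGH.1.exists_eVariationOn_le hK
  obtain ⟨r, hr, hKU⟩ := hwc.exists_radius hK
  obtain ⟨m, hm⟩ := ENNReal.exists_nat_mul_gt (ENNReal.ofReal_pos.2 (half_pos hr)).ne'
    (ENNReal.ofReal_ne_top (r := C))
  obtain ⟨N, hN⟩ := eventually_atTop.1 h
  choose γ a b hγ hγa hγb using fun i =>
    hpc.exists_isCausalPath (hN (i + N) (Nat.le_add_left N i)).2.1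
  have hγK : ∀ i, MapsTo (γ i) (Icc (a i) (b i)) {y | S.causal u y ∧ S.causal y v} := fun i =>
    (hγ i).mapsTo ((hγa i).symm ▸ (hN _ (Nat.le_add_left N i)).1)
      ((hγb i).symm ▸ (hN _ (Nat.le_add_left N i)).2.2)
  refine causal_of_tendsto_of_eVariationOn_le hK hr hKU m hγ hγK
    (fun i => (hC _ _ _ (hγ i) (hγK i)).trans hm.le) ?_ ?_
  · simpa only [hγa, Function.comp_def] using hp.comp (tendsto_add_atTop_nat N)
  · simpa only [hγb, Function.comp_def] using hq.comp (tendsto_add_atTop_nat N)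

theorem Localizable.exists_eventually_chron (hloc : S.Localizable) (z : X) :
    ∃ u v, ∀ᶠ y in 𝓝 z, S.chron u y ∧ S.chron y v := by
  obtain ⟨Ω, hΩ, hzΩ, -, ω, hω, -, -, hωpos, -, hI, -⟩ := hloc z
  obtain ⟨⟨v, hvΩ, hzv⟩, u, huΩ, huz⟩ := hI z hzΩ
  have hcont : ∀ {p q}, p ∈ Ω → q ∈ Ω → ContinuousAt (fun y : X × X => ω y.1 y.2) (p, q) :=
    fun hp hq => hω.continuousAt ((hΩ.prod hΩ).mem_nhds ⟨hp, hq⟩)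
  have hu : ∀ᶠ y in 𝓝 z, 0 < ω u y :=
    ((hcont huΩ hzΩ).tendsto.comp (tendsto_const_nhds.prodMk_nhds tendsto_id)).eventually
      (eventually_gt_nhds ((hωpos u huΩ z hzΩ).2 huz))
  have hv : ∀ᶠ y in 𝓝 z, 0 < ω y v :=
    ((hcont hzΩ hvΩ).tendsto.comp (tendsto_id.prodMk_nhds tendsto_const_nhds)).eventually
      (eventually_gt_nhds ((hωpos z hzΩ v hvΩ).2 hzv))
  refine ⟨u, v, ?_⟩
  filter_upwards [hΩ.mem_nhds hzΩ, hu, hv] with y hy hu hv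
  exact ⟨(hωpos u huΩ y hy).1 hu, (hωpos y hy v hvΩ).1 hv⟩

instance : Std.Refl S.causal := ⟨S.causal_refl⟩

instance : IsTrans X S.causal := ⟨fun _ _ _ => S.causal_trans⟩

theorem causal_of_chron_succ {x : ℕ → X} (hx : ∀ n, S.chron (x n) (x (n + 1))) ⦃m n : ℕ⦄
    (h : m ≤ n) : S.causal (x m) (x n) :=
  Nat.rel_of_forall_rel_succ_of_le S.causal (fun n => S.chron_imp_causal (hx n)) h

theorem causal_of_succ_chron {x : ℕ → X} (hx : ∀ n, S.chron (x (n + 1)) (x n)) ⦃m n : ℕ⦄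
    (h : m ≤ n) : S.causal (x n) (x m) :=
  Nat.rel_of_forall_rel_succ_of_le (fun p q => S.causal q p) (fun n => S.chron_imp_causal (hx n)) h

theorem FinitelyCompact.exists_mapClusterPt_of_chron_succ (hFC : S.FinitelyCompact)
    {x : ℕ → X} {B : ℝ} (hx : ∀ n, S.chron (x n) (x (n + 1)))
    (hB : ∀ n, S.tau (x 0) (x (n + 1)) ≤ ENNReal.ofReal B) : ∃ z, MapClusterPt z atTop x := by
  have hBpos : 0 < B := ENNReal.ofReal_pos.1 (((S.tau_pos_iff _ _).2 (hx 0)).trans_le (hB 0))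
  obtain ⟨z, hz⟩ := (hFC B hBpos (x 0) (x 1) fun n => x (n + 1)).1 fun n =>
    ⟨hx 0, causal_of_chron_succ hx (Nat.le_add_left 1 n), hB n⟩
  exact ⟨z, hz.of_comp (tendsto_add_atTop_nat 1)⟩

theorem FinitelyCompact.exists_mapClusterPt_of_succ_chron (hFC : S.FinitelyCompact)
    {x : ℕ → X} {B : ℝ} (hx : ∀ n, S.chron (x (n + 1)) (x n))
    (hB : ∀ n, S.tau (x (n + 1)) (x 0) ≤ ENNReal.ofReal B) : ∃ z, MapClusterPt z atTop x := by
  have hBpos : 0 < B := ENNReal.ofReal_pos.1 (((S.tau_pos_iff _ _).2 (hx 0)).trans_le (hB 0))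
  obtain ⟨z, hz⟩ := (hFC B hBpos (x 0) (x 1) fun n => x (n + 1)).2 fun n =>
    ⟨causal_of_succ_chron hx (Nat.le_add_left 1 n), hx 0, hB n⟩
  exact ⟨z, hz.of_comp (tendsto_add_atTop_nat 1)⟩

end LorentzianPreLength

open LorentzianPreLength in
/-- Finite compactness implies timelike Cauchy completeness for globally hyperbolic
Lorentzian length spaces (Theorem 3.4). -/
theorem timelikeCauchyComplete_of_finitelyCompact
    {X : Type*} [MetricSpace X] (S : LorentzianPreLength X)
    (hLLS : S.IsLorentzianLengthSpace) (hGH : S.GloballyHyperbolic)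
    (hFC : S.FinitelyCompact) :
    S.TimelikeCauchyComplete := by
  obtain ⟨hpc, hwc, hloc, -⟩ := hLLS
  rintro x B - - (⟨hx, hB⟩ | ⟨hx, hB⟩)
  · obtain ⟨z, hz⟩ := hFC.exists_mapClusterPt_of_chron_succ hx fun n => by
      simpa using hB 0 (n + 1) n.succ_pos
    obtain ⟨u, v, huv⟩ := hloc.exists_eventually_chron z
    exact ⟨z, tendsto_of_mapClusterPt_of_forall_le (R := S.causal) S.causal_trans
      (causal_antisymm hpc hGH) (hGH.2 u v)
      (huv.mono fun _ h => ⟨S.chron_imp_causal h.1, S.chron_imp_causal h.2⟩)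
      (causal_of_tendsto hpc hwc hGH)
      (causal_of_chron_succ hx) hz⟩
  · obtain ⟨z, hz⟩ := hFC.exists_mapClusterPt_of_succ_chron hx fun n => by
      simpa using hB 0 (n + 1) n.succ_pos
    obtain ⟨u, v, huv⟩ := hloc.exists_eventually_chron z
    exact ⟨z, tendsto_of_mapClusterPt_of_forall_le (R := fun p q => S.causal q p)
      (fun h₁ h₂ => S.causal_trans h₂ h₁) (fun h₁ h₂ => causal_antisymm hpc hGH h₂ h₁)
      (by simpa only [and_comm] using hGH.2 u v)
      (huv.mono fun _ h => ⟨S.chron_imp_causal h.2, S.chron_imp_causal h.1⟩)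
      (fun h hp hq =>
        causal_of_tendsto hpc hwc hGH (h.mono fun _ h => ⟨h.2.2, h.2.1, h.1⟩) hq hp)
      (causal_of_succ_chron hx) hz⟩
end
end

section
/- Let (X, ≪, ≤, d, τ) be a globally hyperbolic Lorentzian length space and let (x_n) be a sequence in X with x_n ≪ x_{n+1} for all n. If some subsequence (x_{n(k)}) converges to a point x_∞ ∈ X, then the full sequence (x_n) converges to x_∞. -/
open Set Filter Topology
open scoped ENNReal NNReal

noncomputable section

/-!
Pick `q ≫ x∞`. Since `τ` is lower semicontinuous, `I⁻(q)` is open, so it contains a term of the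
subsequence, and hence every `xₘ ≤ q`: the whole sequence lies in the compact diamond `J(x₀, q)`.
Concatenating timelike curves from `xᵢ` to `xᵢ₊₁` gives, for each `N`, a causal curve in this
diamond through `x₀, …, x_N`, whose `d`-length is at least `∑_{i<N} d(xᵢ, xᵢ₊₁)`. Non-total
imprisonment bounds these lengths uniformly, so the sequence has finite `d`-length, is Cauchy, and
converges to the limit of its subsequence.
-/

theorem LipschitzOnWith.Icc_union_Icc {X : Type*} [PseudoMetricSpace X] {f : ℝ → X}
    {K₁ K₂ : ℝ≥0} {a b c : ℝ} (h₁ : LipschitzOnWith K₁ f (Icc a b))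
    (h₂ : LipschitzOnWith K₂ f (Icc b c)) :
    LipschitzOnWith (max K₁ K₂) f (Icc a c) := by
  replace h₁ := h₁.weaken (le_max_left K₁ K₂)
  replace h₂ := h₂.weaken (le_max_right K₁ K₂)
  refine LipschitzOnWith.of_dist_le_mul fun p hp q hq => ?_
  wlog hpq : p ≤ q generalizing p q
  · rw [dist_comm, dist_comm p]
    exact this q hq p hp (le_of_not_ge hpq)
  rcases le_total q b with hqb | hbq
  · exact h₁.dist_le_mul p ⟨hp.1, hpq.trans hqb⟩ q ⟨hp.1.trans hpq, hqb⟩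
  rcases le_total b p with hbp | hpb
  · exact h₂.dist_le_mul p ⟨hbp, hpq.trans hq.2⟩ q ⟨hbp.trans hpq, hq.2⟩
  calc dist (f p) (f q) ≤ dist (f p) (f b) + dist (f b) (f q) := dist_triangle _ _ _
    _ ≤ max K₁ K₂ * dist p b + max K₁ K₂ * dist b q :=
      add_le_add (h₁.dist_le_mul p ⟨hp.1, hpb⟩ b ⟨hp.1.trans hpb, le_rfl⟩)
        (h₂.dist_le_mul b ⟨le_rfl, hbq.trans hq.2⟩ q ⟨hbq, hq.2⟩)
    _ = max K₁ K₂ * dist p q := by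
      rw [← mul_add, Real.dist_eq, Real.dist_eq, Real.dist_eq, abs_of_nonpos (by linarith),
        abs_of_nonpos (by linarith), abs_of_nonpos (by linarith)]
      ring

namespace LorentzianPreLength

variable {X : Type*} [MetricSpace X] {S : LorentzianPreLength X}

theorem locLipOn_iff_exists_lipschitzOnWith {γ : ℝ → X} {I : Set ℝ} (hI : IsCompact I) :
    LocLipOn γ I ↔ ∃ K, LipschitzOnWith K γ I :=
  ⟨fun h => LocallyLipschitzOn.exists_lipschitzOnWith_of_compact hI fun t ht => h t ht,
    fun ⟨K, hK⟩ _ _ => ⟨K, I, self_mem_nhdsWithin, hK⟩⟩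

theorem IsTimelikeCurveOn.isCausalCurveOn {γ : ℝ → X} {I : Set ℝ}
    (h : S.IsTimelikeCurveOn γ I) : S.IsCausalCurveOn γ I :=
  ⟨h.1, h.2.1, h.2.2.1, fun _ hs _ ht hst => S.chron_imp_causal (h.2.2.2 hs ht hst)⟩

theorem IsCausalCurveOn.mapsTo_causalDiamond {γ : ℝ → X} {a b : ℝ}
    (h : S.IsCausalCurveOn γ (Icc a b)) :
    MapsTo γ (Icc a b) {z | S.causal (γ a) z ∧ S.causal z (γ b)} := by
  intro t ht
  constructor
  · rcases ht.1.eq_or_lt with rfl | hat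
    · exact S.causal_refl _
    · exact h.2.2.2 ⟨le_rfl, ht.1.trans ht.2⟩ ht hat
  · rcases ht.2.eq_or_lt with rfl | htb
    · exact S.causal_refl _
    · exact h.2.2.2 ht ⟨ht.1.trans ht.2, le_rfl⟩ htb

theorem IsCausalCurveOn.exists_reparam {γ : ℝ → X} {a b : ℝ}
    (hγ : S.IsCausalCurveOn γ (Icc a b)) (hab : a < b) {c d : ℝ} (hcd : c < d) :
    ∃ γ' : ℝ → X, S.IsCausalCurveOn γ' (Icc c d) ∧ γ' c = γ a ∧ γ' d = γ b := by
  obtain ⟨-, ⟨s, hs, t, ht, hst⟩, hlip, hcausal⟩ := hγ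
  obtain ⟨K, hK⟩ := (locLipOn_iff_exists_lipschitzOnWith isCompact_Icc).1 hlip
  set r := (b - a) / (d - c)
  have hr : 0 < r := div_pos (sub_pos.2 hab) (sub_pos.2 hcd)
  set φ : ℝ → ℝ := fun t => r * t + (a - r * c)
  have hφc : φ c = a := by simp only [φ]; ring
  have hφd : φ d = b := by
    simp only [φ, r]
    rw [show (b - a) / (d - c) * d + (a - (b - a) / (d - c) * c) = (b - a) / (d - c) * (d - c) + a
      by ring, div_mul_cancel₀ _ (sub_ne_zero.2 hcd.ne')]
    ring
  have himage : φ '' Icc c d = Icc a b := by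
    rw [image_affine_Icc' hr]
    exact congrArg₂ Icc hφc hφd
  have hφlip : LipschitzWith r.toNNReal φ := LipschitzWith.of_dist_le_mul fun u v => by
    rw [Real.dist_eq, Real.dist_eq, Real.coe_toNNReal _ hr.le, ← abs_of_pos hr, ← abs_mul]
    exact le_of_eq (congrArg abs (by ring))
  refine ⟨γ ∘ φ, ⟨ordConnected_Icc, ?_, ?_, ?_⟩, by simp [hφc], by simp [hφd]⟩
  · rw [← himage] at hs ht
    obtain ⟨s', hs', rfl⟩ := hs
    obtain ⟨t', ht', rfl⟩ := ht
    exact ⟨s', hs', t', ht', hst⟩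
  · exact (locLipOn_iff_exists_lipschitzOnWith isCompact_Icc).2
      ⟨_, hK.comp hφlip.lipschitzOnWith (himage ▸ mapsTo_image φ _)⟩
  · intro u hu v hv huv
    exact hcausal (himage ▸ mem_image_of_mem φ hu) (himage ▸ mem_image_of_mem φ hv)
      (by simp only [φ]; gcongr)

theorem IsCausalCurveOn.piecewise {γ₁ γ₂ : ℝ → X} {a b c : ℝ}
    (h₁ : S.IsCausalCurveOn γ₁ (Icc a b)) (h₂ : S.IsCausalCurveOn γ₂ (Icc b c))
    (hb : γ₁ b = γ₂ b) :
    S.IsCausalCurveOn (fun t => if t ≤ b then γ₁ t else γ₂ t) (Icc a c) := by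
  set γ := fun t => if t ≤ b then γ₁ t else γ₂ t
  have hbc : b ≤ c := by obtain ⟨s, hs, -⟩ := h₂.2.1; exact hs.1.trans hs.2
  have e₁ : EqOn γ γ₁ (Icc a b) := fun t ht => if_pos ht.2
  have e₂ : EqOn γ γ₂ (Icc b c) := fun t ht => by
    rcases ht.1.eq_or_lt with rfl | hbt
    · simp [γ, hb]
    · simp [γ, not_le.2 hbt]
  obtain ⟨K₁, hK₁⟩ := (locLipOn_iff_exists_lipschitzOnWith isCompact_Icc).1 h₁.2.2.1
  obtain ⟨K₂, hK₂⟩ := (locLipOn_iff_exists_lipschitzOnWith isCompact_Icc).1 h₂.2.2.1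
  refine ⟨ordConnected_Icc, ?_, ?_, ?_⟩
  · obtain ⟨s, hs, t, ht, hst⟩ := h₁.2.1
    exact ⟨s, ⟨hs.1, hs.2.trans hbc⟩, t, ⟨ht.1, ht.2.trans hbc⟩, by rwa [e₁ hs, e₁ ht]⟩
  · have l₁ : LipschitzOnWith K₁ γ (Icc a b) := fun s hs t ht => by
      rw [e₁ hs, e₁ ht]; exact hK₁ hs ht
    have l₂ : LipschitzOnWith K₂ γ (Icc b c) := fun s hs t ht => by
      rw [e₂ hs, e₂ ht]; exact hK₂ hs ht
    exact (locLipOn_iff_exists_lipschitzOnWith isCompact_Icc).2 ⟨_, l₁.Icc_union_Icc l₂⟩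
  · intro s hs t ht hst
    rcases le_total t b with htb | hbt
    · rw [e₁ ⟨hs.1, hst.le.trans htb⟩, e₁ ⟨ht.1, htb⟩]
      exact h₁.2.2.2 ⟨hs.1, hst.le.trans htb⟩ ⟨ht.1, htb⟩ hst
    rcases le_total s b with hsb | hbs
    · rw [e₁ ⟨hs.1, hsb⟩, e₂ ⟨hbt, ht.2⟩]
      exact S.causal_trans (h₁.mapsTo_causalDiamond ⟨hs.1, hsb⟩).2
        (hb ▸ (h₂.mapsTo_causalDiamond ⟨hbt, ht.2⟩).1)
    · rw [e₂ ⟨hbs, hs.2⟩, e₂ ⟨hbt, ht.2⟩]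
      exact h₂.2.2.2 ⟨hbs, hs.2⟩ ⟨hbt, ht.2⟩ hst

theorem exists_causalCurveOn_Icc_natCast_of_chain {x : ℕ → X}
    (hx : ∀ i, ∃ (γ : ℝ → X) (a b : ℝ), a < b ∧ S.IsCausalCurveOn γ (Icc a b) ∧
      γ a = x i ∧ γ b = x (i + 1))
    {N : ℕ} (hN : 1 ≤ N) :
    ∃ Γ : ℝ → X, S.IsCausalCurveOn Γ (Icc 0 N) ∧ ∀ i ≤ N, Γ i = x i := by
  have hunit : ∀ i : ℕ, ∃ γ : ℝ → X, S.IsCausalCurveOn γ (Icc i ((i + 1 : ℕ) : ℝ)) ∧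
      γ i = x i ∧ γ (i + 1 : ℕ) = x (i + 1) := by
    intro i
    obtain ⟨γ, a, b, hab, hγ, ha, hb⟩ := hx i
    obtain ⟨γ', hγ', hc, hd⟩ := hγ.exists_reparam hab (Nat.cast_lt.2 i.lt_succ_self)
    exact ⟨γ', hγ', hc.trans ha, hd.trans hb⟩
  induction N, hN using Nat.le_induction with
  | base =>
    obtain ⟨γ, hγ, h0, h1⟩ := hunit 0
    refine ⟨γ, by simpa using hγ, fun i hi => ?_⟩
    interval_cases i
    · simpa using h0
    · simpa using h1
  | succ N _ ih =>
    obtain ⟨Γ, hΓ, hΓx⟩ := ih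
    obtain ⟨γ, hγ, hγN, hγN'⟩ := hunit N
    refine ⟨_, hΓ.piecewise hγ ((hΓx N le_rfl).trans hγN.symm), fun i hi => ?_⟩
    rcases hi.lt_or_eq with hi | rfl
    · have hiN : i ≤ N := Nat.lt_succ_iff.1 hi
      simp [Nat.cast_le.2 hiN, hΓx i hiN]
    · rw [if_neg (by exact_mod_cast N.not_succ_le_self), hγN']

theorem sum_edist_le_dLength (Γ : ℝ → X) {t : ℕ → ℝ} (ht : StrictMono t) (N : ℕ) :
    ∑ i ∈ Finset.range N, edist (Γ (t i)) (Γ (t (i + 1))) ≤ dLength Γ (t 0) (t N) := by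
  rw [← Fin.sum_univ_eq_sum_range (fun i => edist (Γ (t i)) (Γ (t (i + 1))))]
  exact le_iSup_of_le N <| le_iSup_of_le (fun j : Fin (N + 1) => t j) <|
    le_iSup_of_le (ht.comp Fin.val_strictMono) <| le_iSup_of_le rfl <| le_iSup_of_le rfl le_rfl

theorem GloballyHyperbolic.cauchySeq_of_causal_chain (hGH : S.GloballyHyperbolic) {x : ℕ → X}
    (hx : ∀ i, ∃ (γ : ℝ → X) (a b : ℝ), a < b ∧ S.IsCausalCurveOn γ (Icc a b) ∧
      γ a = x i ∧ γ b = x (i + 1))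
    {q : X} (hq : ∀ i, S.causal (x i) q) : CauchySeq x := by
  obtain ⟨C, -, hC⟩ := hGH.1 _ (hGH.2 (x 0) q)
  suffices hsum : ∀ N, ∑ i ∈ Finset.range N, edist (x i) (x (i + 1)) ≤ ENNReal.ofReal C from
    cauchySeq_of_edist_le_of_tsum_ne_top _ (fun i => le_rfl) <|
      ne_top_of_le_ne_top ENNReal.ofReal_ne_top (ENNReal.tsum_le_of_sum_range_le hsum)
  intro N
  rcases N.eq_zero_or_pos with rfl | hN
  · simp
  obtain ⟨Γ, hΓ, hΓx⟩ := exists_causalCurveOn_Icc_natCast_of_chain hx hN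
  have hΓ0 : Γ 0 = x 0 := by simpa using hΓx 0 N.zero_le
  have hK : ∀ t ∈ Icc (0 : ℝ) N, Γ t ∈ {z | S.causal (x 0) z ∧ S.causal z q} := fun t ht =>
    have h := hΓ.mapsTo_causalDiamond ht
    ⟨hΓ0 ▸ h.1, S.causal_trans h.2 ((hΓx N le_rfl).symm ▸ hq N)⟩
  calc ∑ i ∈ Finset.range N, edist (x i) (x (i + 1))
      = ∑ i ∈ Finset.range N, edist (Γ (i : ℕ)) (Γ (i + 1 : ℕ)) :=
        Finset.sum_congr rfl fun i hi => by
          rw [hΓx i (Finset.mem_range.1 hi).le, hΓx (i + 1) (Finset.mem_range.1 hi)]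
    _ ≤ dLength Γ ((0 : ℕ) : ℝ) N := sum_edist_le_dLength Γ Nat.strictMono_cast N
    _ ≤ ENNReal.ofReal C := by simpa using hC Γ 0 N (by positivity) hΓ hK

theorem causal_of_tendsto_comp_of_chron {x : ℕ → X} (hx : ∀ i, S.causal (x i) (x (i + 1)))
    {n : ℕ → ℕ} (hn : Tendsto n atTop atTop) {y q : X} (hy : Tendsto (x ∘ n) atTop (𝓝 y))
    (hyq : S.chron y q) (m : ℕ) : S.causal (x m) q := by
  have hpair : Tendsto (fun k => (x (n k), q)) atTop (𝓝 (y, q)) := hy.prodMk_nhds tendsto_const_nhds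
  obtain ⟨k, hmk, hkq⟩ := ((hn.eventually_ge_atTop m).and
    (hpair.eventually (S.tau_lsc (y, q) 0 ((S.tau_pos_iff _ _).2 hyq)))).exists
  have : Std.Refl S.causal := ⟨S.causal_refl⟩
  have : IsTrans X S.causal := ⟨fun _ _ _ => S.causal_trans⟩
  exact S.causal_trans (Nat.rel_of_forall_rel_succ_of_le _ hx hmk)
    (S.chron_imp_causal ((S.tau_pos_iff _ _).1 hkq))

theorem Localizable.exists_chron (h : S.Localizable) (y : X) : ∃ z, S.chron y z := by
  obtain ⟨Ω, -, hy, -, ω, -, -, -, -, -, hfut, -⟩ := h y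
  obtain ⟨z, -, hz⟩ := (hfut y hy).1
  exact ⟨z, hz⟩

end LorentzianPreLength

open LorentzianPreLength in
/-- In a globally hyperbolic Lorentzian length space, a chronologically increasing
sequence converges to the limit of any of its convergent subsequences. -/
theorem tendsto_of_subseq_tendsto_of_chron_chain
    {X : Type*} [MetricSpace X] (S : LorentzianPreLength X)
    (hLLS : S.IsLorentzianLengthSpace) (hGH : S.GloballyHyperbolic)
    (x : ℕ → X) (hchain : ∀ n, S.chron (x n) (x (n + 1)))
    (n : ℕ → ℕ) (hn : StrictMono n) (xinf : X)
    (hconv : Filter.Tendsto (fun k => x (n k)) Filter.atTop (nhds xinf)) :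
    Filter.Tendsto x Filter.atTop (nhds xinf) := by
  obtain ⟨⟨htimelike, -⟩, -, hloc, -⟩ := hLLS
  obtain ⟨q, hq⟩ := hloc.exists_chron xinf
  have hxq : ∀ m, S.causal (x m) q := causal_of_tendsto_comp_of_chron
    (fun i => S.chron_imp_causal (hchain i)) hn.tendsto_atTop hconv hq
  have hjoin : ∀ i, ∃ (γ : ℝ → X) (a b : ℝ), a < b ∧ S.IsCausalCurveOn γ (Icc a b) ∧
      γ a = x i ∧ γ b = x (i + 1) := fun i => by
    obtain ⟨γ, a, b, hab, hγ, ha, hb⟩ := htimelike _ _ (hchain i)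
    exact ⟨γ, a, b, hab, hγ.isCausalCurveOn, ha, hb⟩
  exact tendsto_nhds_of_cauchySeq_of_subseq (hGH.cauchySeq_of_causal_chain hjoin hxq)
    hn.tendsto_atTop hconv
end
end

section
/- On ℝ² with the metric g = −a(x⁰)(dx⁰)² + b(x⁰)(dx¹)² (a, b ∈ C¹ strictly positive), the spacetime is causally non-branching and non-intertwining: (1) no causal geodesic γ : [α,β] → ℝ² branches at any t₀ ∈ (α,β); and (2) for every p ∈ ℝ², every ε > 0 and all causal geodesics γ₁, γ₂ : [0,ε] → ℝ² with γ₁(0) = γ₂(0) = p and γ̇₁(0) = γ̇₂(0), either γ₁ = γ₂ on [0,ε] or the set γ₁((0,ε]) ∩ γ₂((0,ε]) has no accumulation point. -/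
/-!
The metric does not depend on `x¹`, so along a geodesic the momentum `b(x⁰) ẋ¹` and the energy
`−a(x⁰)(ẋ⁰)² + b(x⁰)(ẋ¹)²` are constant. For causal initial data these constants make
`(ẋ⁰)² = (c²/b(x⁰) − E)/a(x⁰)` strictly positive, so `ẋ⁰` keeps its initial sign and `x⁰` solves an
autonomous scalar equation `ẋ⁰ = φ(x⁰)` with `φ` continuous and nowhere zero. Separating variables,
such an equation has unique solutions although `a, b` are only `C¹` (the geodesic equation is not
Lipschitz). Then `ẋ¹ = c/b(x⁰)` is determined as well, so a causal geodesic is determined by its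
initial point and velocity, which rules out both branching and intertwining.
-/

open Set Filter Topology
open scoped ENNReal NNReal

noncomputable section

/-- A geodesic of the metric `g = −a(x⁰)(dx⁰)² + b(x⁰)(dx¹)²` on ℝ², defined on the
interval `I`: a C² curve `γ(s) = (x⁰(s), x¹(s))` satisfying
`ẍ⁰ + (a′/(2a))(ẋ⁰)² + (b′/(2a))(ẋ¹)² = 0` and `ẍ¹ + (b′/b) ẋ⁰ ẋ¹ = 0`. -/
def IsGeodesicAB (a b : ℝ → ℝ) (γ : ℝ → ℝ × ℝ) (I : Set ℝ) : Prop :=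
  ContDiffOn ℝ 2 γ I ∧ ∀ s ∈ I,
    (derivWithin (fun u => derivWithin (fun w => (γ w).1) I u) I s
        + (deriv a ((γ s).1) / (2 * a ((γ s).1)))
            * (derivWithin (fun w => (γ w).1) I s) ^ 2
        + (deriv b ((γ s).1) / (2 * a ((γ s).1)))
            * (derivWithin (fun w => (γ w).2) I s) ^ 2 = 0) ∧
    (derivWithin (fun u => derivWithin (fun w => (γ w).2) I u) I s
        + (deriv b ((γ s).1) / b ((γ s).1))
            * derivWithin (fun w => (γ w).1) I s
            * derivWithin (fun w => (γ w).2) I s = 0)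

/-- A vector `v` is causal at the point `x` for the metric
`g = −a(x⁰)(dx⁰)² + b(x⁰)(dx¹)²`. -/
def CausalVecAB (a b : ℝ → ℝ) (x v : ℝ × ℝ) : Prop :=
  v ≠ 0 ∧ -(a x.1) * v.1 ^ 2 + b x.1 * v.2 ^ 2 ≤ 0

/-- A causal geodesic of the metric `g = −a(x⁰)(dx⁰)² + b(x⁰)(dx¹)²`. -/
def IsCausalGeodesicAB (a b : ℝ → ℝ) (γ : ℝ → ℝ × ℝ) (I : Set ℝ) : Prop :=
  IsGeodesicAB a b γ I ∧ ∀ s ∈ I, CausalVecAB a b (γ s) (derivWithin γ I s)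

/-- A geodesic `γ : [α,β] → ℝ²` of the metric branches at `t₀ ∈ (α,β)`. -/
def BranchesAtAB (a b : ℝ → ℝ) (γ : ℝ → ℝ × ℝ) (α β t₀ : ℝ) : Prop :=
  ∃ ε > 0, α ≤ t₀ - ε ∧ t₀ + ε ≤ β ∧
    ∃ σ : ℝ → ℝ × ℝ, IsGeodesicAB a b σ (Ioo (t₀ - ε) (t₀ + ε)) ∧
      (∀ t ∈ Ioc (t₀ - ε) t₀, γ t = σ t) ∧
      (γ '' Ioo t₀ (t₀ + ε)) ∩ (σ '' Ioo t₀ (t₀ + ε)) = ∅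

theorem HasDerivWithinAt.fst {E F : Type*} [NormedAddCommGroup E] [NormedSpace ℝ E]
    [NormedAddCommGroup F] [NormedSpace ℝ F] {f : ℝ → E × F} {f' : E × F} {s : Set ℝ} {x : ℝ}
    (h : HasDerivWithinAt f f' s x) : HasDerivWithinAt (fun y => (f y).1) f'.1 s x :=
  (hasFDerivAt_fst (𝕜 := ℝ) (p := f x)).comp_hasDerivWithinAt x h

theorem HasDerivWithinAt.snd {E F : Type*} [NormedAddCommGroup E] [NormedSpace ℝ E]
    [NormedAddCommGroup F] [NormedSpace ℝ F] {f : ℝ → E × F} {f' : E × F} {s : Set ℝ} {x : ℝ}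
    (h : HasDerivWithinAt f f' s x) : HasDerivWithinAt (fun y => (f y).2) f'.2 s x :=
  (hasFDerivAt_snd (𝕜 := ℝ) (p := f x)).comp_hasDerivWithinAt x h

theorem eqOn_Icc_of_hasDerivWithinAt {E : Type*} [NormedAddCommGroup E] [NormedSpace ℝ E]
    {f g f' : ℝ → E} {t₀ t₁ : ℝ}
    (hf : ∀ s ∈ Icc t₀ t₁, HasDerivWithinAt f (f' s) (Icc t₀ t₁) s)
    (hg : ∀ s ∈ Icc t₀ t₁, HasDerivWithinAt g (f' s) (Icc t₀ t₁) s) (h₀ : f t₀ = g t₀) :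
    EqOn f g (Icc t₀ t₁) := fun s hs =>
  eq_of_has_deriv_right_eq
    (fun r hr => (hf r (Ico_subset_Icc_self hr)).mono_of_mem_nhdsWithin (Icc_mem_nhdsGE_of_mem hr))
    (fun r hr => (hg r (Ico_subset_Icc_self hr)).mono_of_mem_nhdsWithin (Icc_mem_nhdsGE_of_mem hr))
    (fun r hr => (hf r hr).continuousWithinAt) (fun r hr => (hg r hr).continuousWithinAt) h₀ s hs

theorem injective_of_hasDerivAt_ne_zero {f f' : ℝ → ℝ} (hf : ∀ x, HasDerivAt f (f' x) x)
    (hf' : ∀ x, f' x ≠ 0) : Function.Injective f := by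
  have hlt : ∀ x y, x < y → f x ≠ f y := fun x y hxy hfxy => by
    obtain ⟨c, -, hc⟩ := exists_hasDerivAt_eq_zero hxy
      (fun z _ => (hf z).continuousAt.continuousWithinAt) hfxy (fun z _ => hf z)
    exact hf' c hc
  intro x y hxy
  rcases lt_trichotomy x y with h | h | h
  · exact absurd hxy (hlt x y h)
  · exact h
  · exact absurd hxy.symm (hlt y x h)

theorem eqOn_Icc_of_hasDerivWithinAt_comp {φ u w : ℝ → ℝ} {t₀ t₁ : ℝ} (hφ : Continuous φ)
    (hφ₀ : ∀ z, φ z ≠ 0)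
    (hu : ∀ s ∈ Icc t₀ t₁, HasDerivWithinAt u (φ (u s)) (Icc t₀ t₁) s)
    (hw : ∀ s ∈ Icc t₀ t₁, HasDerivWithinAt w (φ (w s)) (Icc t₀ t₁) s) (h₀ : u t₀ = w t₀) :
    EqOn u w (Icc t₀ t₁) := by
  -- Separation of variables: `G ∘ u` and `G ∘ w` have derivative `1`, and `G` is injective.
  set G : ℝ → ℝ := fun z => ∫ y in (0 : ℝ)..z, (φ y)⁻¹
  have hφinv : Continuous fun z => (φ z)⁻¹ := hφ.inv₀ hφ₀
  have hG : ∀ z, HasDerivAt G (φ z)⁻¹ z := fun z =>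
    intervalIntegral.integral_hasDerivAt_right (hφinv.intervalIntegrable 0 z)
      (hφinv.stronglyMeasurableAtFilter _ _) hφinv.continuousAt
  have hGcomp : ∀ v : ℝ → ℝ, (∀ s ∈ Icc t₀ t₁, HasDerivWithinAt v (φ (v s)) (Icc t₀ t₁) s) →
      ∀ s ∈ Icc t₀ t₁, HasDerivWithinAt (G ∘ v) 1 (Icc t₀ t₁) s := fun v hv s hs => by
    simpa [hφ₀] using (hG (v s)).comp_hasDerivWithinAt s (hv s hs)
  have hGuw := eqOn_Icc_of_hasDerivWithinAt (hGcomp u hu) (hGcomp w hw) (by simp [h₀])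
  exact fun s hs => injective_of_hasDerivAt_ne_zero hG (fun z => inv_ne_zero (hφ₀ z)) (hGuw hs)

theorem deriv_eq_of_eventuallyEq_nhdsLE {E : Type*} [NormedAddCommGroup E] [NormedSpace ℝ E]
    {f g : ℝ → E} {x : ℝ} (hf : DifferentiableAt ℝ f x) (hg : DifferentiableAt ℝ g x)
    (h : f =ᶠ[𝓝[≤] x] g) : deriv f x = deriv g x := by
  rw [← hf.derivWithin (uniqueDiffWithinAt_Iic x), ← hg.derivWithin (uniqueDiffWithinAt_Iic x),
    h.derivWithin_eq (h.eq_of_nhdsWithin self_mem_Iic)]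

section

def momentumAB (b : ℝ → ℝ) (x v : ℝ × ℝ) : ℝ := b x.1 * v.2

def energyAB (a b : ℝ → ℝ) (x v : ℝ × ℝ) : ℝ := -(a x.1) * v.1 ^ 2 + b x.1 * v.2 ^ 2

def geodesicAccelAB (a b : ℝ → ℝ) (x v : ℝ × ℝ) : ℝ × ℝ :=
  (-(deriv a x.1 / (2 * a x.1)) * v.1 ^ 2 - (deriv b x.1 / (2 * a x.1)) * v.2 ^ 2,
    -(deriv b x.1 / b x.1) * v.1 * v.2)

variable {a b : ℝ → ℝ} {γ : ℝ → ℝ × ℝ} {t₀ t₁ : ℝ}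

namespace IsGeodesicAB

theorem mono {S J : Set ℝ} (hg : IsGeodesicAB a b γ S) (hS : UniqueDiffOn ℝ S)
    (hJ : UniqueDiffOn ℝ J) (hJS : J ⊆ S) : IsGeodesicAB a b γ J := by
  refine ⟨hg.1.mono hJS, fun s hs => ?_⟩
  have hderiv : ∀ f : ℝ → ℝ, ContDiffOn ℝ 2 f S →
      (∀ r ∈ J, derivWithin f J r = derivWithin f S r) ∧
        derivWithin (derivWithin f J) J s = derivWithin (derivWithin f S) S s := by
    intro f hf
    have h₁ : ∀ r ∈ J, derivWithin f J r = derivWithin f S r := fun r hr =>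
      derivWithin_subset hJS (hJ r hr) (hf.differentiableOn (by norm_num) r (hJS hr))
    refine ⟨h₁, (derivWithin_congr h₁ (h₁ s hs)).trans (derivWithin_subset hJS (hJ s hs) ?_)⟩
    exact (hf.derivWithin hS (m := 1) (by norm_num)).differentiableOn one_ne_zero s (hJS hs)
  obtain ⟨hx₁, hx₂⟩ := hderiv (fun w => (γ w).1) (contDiff_fst.comp_contDiffOn hg.1)
  obtain ⟨hy₁, hy₂⟩ := hderiv (fun w => (γ w).2) (contDiff_snd.comp_contDiffOn hg.1)
  obtain ⟨hgx, hgy⟩ := hg.2 s (hJS hs)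
  refine ⟨?_, ?_⟩
  · rw [hx₂, hx₁ s hs, hy₁ s hs]; exact hgx
  · rw [hy₂, hx₁ s hs, hy₁ s hs]; exact hgy

theorem hasDerivWithinAt_derivWithin {I : Set ℝ} (hI : UniqueDiffOn ℝ I)
    (hg : IsGeodesicAB a b γ I) {s : ℝ} (hs : s ∈ I) :
    HasDerivWithinAt (derivWithin γ I) (geodesicAccelAB a b (γ s) (derivWithin γ I s)) I s := by
  set x : ℝ → ℝ := fun w => (γ w).1
  set y : ℝ → ℝ := fun w => (γ w).2
  have hvel : ∀ r ∈ I, derivWithin γ I r = (derivWithin x I r, derivWithin y I r) := fun r hr =>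
    have hγ := (hg.1.differentiableOn (by norm_num) r hr).hasDerivWithinAt
    Prod.ext (hγ.fst.derivWithin (hI r hr)).symm (hγ.snd.derivWithin (hI r hr)).symm
  have hacc : ∀ f : ℝ → ℝ, ContDiffOn ℝ 2 f I →
      HasDerivWithinAt (derivWithin f I) (derivWithin (derivWithin f I) I s) I s := fun f hf =>
    ((hf.derivWithin hI (m := 1) (by norm_num)).differentiableOn one_ne_zero s hs).hasDerivWithinAt
  have h := ((hacc x (contDiff_fst.comp_contDiffOn hg.1)).prodMk
    (hacc y (contDiff_snd.comp_contDiffOn hg.1))).congr_of_mem hvel hs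
  refine h.congr_deriv ?_
  obtain ⟨hgx, hgy⟩ := hg.2 s hs
  rw [hvel s hs, geodesicAccelAB, Prod.mk.injEq]
  constructor <;> linarith

theorem momentumAB_eq (hb : Differentiable ℝ b) (hb₀ : ∀ z, b z ≠ 0) (hab : t₀ < t₁)
    (hg : IsGeodesicAB a b γ (Icc t₀ t₁)) :
    ∀ s ∈ Icc t₀ t₁, momentumAB b (γ s) (derivWithin γ (Icc t₀ t₁) s)
      = momentumAB b (γ t₀) (derivWithin γ (Icc t₀ t₁) t₀) := by
  refine eqOn_Icc_of_hasDerivWithinAt (fun s hs => ?_) (fun s _ => hasDerivWithinAt_const _ _ _) rfl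
  have hγ := (hg.1.differentiableOn (by norm_num) s hs).hasDerivWithinAt
  have hγ' := hg.hasDerivWithinAt_derivWithin (uniqueDiffOn_Icc hab) hs
  refine (((hb _).hasDerivAt.comp_hasDerivWithinAt s hγ.fst).mul hγ'.snd).congr_deriv ?_
  have := hb₀ (γ s).1
  simp only [geodesicAccelAB, Function.comp_apply]
  field_simp
  ring

theorem energyAB_eq (ha : Differentiable ℝ a) (hb : Differentiable ℝ b) (ha₀ : ∀ z, a z ≠ 0)
    (hb₀ : ∀ z, b z ≠ 0) (hab : t₀ < t₁) (hg : IsGeodesicAB a b γ (Icc t₀ t₁)) :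
    ∀ s ∈ Icc t₀ t₁, energyAB a b (γ s) (derivWithin γ (Icc t₀ t₁) s)
      = energyAB a b (γ t₀) (derivWithin γ (Icc t₀ t₁) t₀) := by
  refine eqOn_Icc_of_hasDerivWithinAt (fun s hs => ?_) (fun s _ => hasDerivWithinAt_const _ _ _) rfl
  have hγ := (hg.1.differentiableOn (by norm_num) s hs).hasDerivWithinAt
  have hγ' := hg.hasDerivWithinAt_derivWithin (uniqueDiffOn_Icc hab) hs
  refine ((((ha _).hasDerivAt.comp_hasDerivWithinAt s hγ.fst).neg.mul (hγ'.fst.pow 2)).add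
    (((hb _).hasDerivAt.comp_hasDerivWithinAt s hγ.fst).mul (hγ'.snd.pow 2))).congr_deriv ?_
  have := ha₀ (γ s).1
  have := hb₀ (γ s).1
  simp only [geodesicAccelAB, Function.comp_apply, Pi.pow_apply, Pi.neg_apply]
  field_simp
  ring

end IsGeodesicAB

-- By conservation of `momentumAB` and `energyAB`, `timeSpeedSqAB a b p v z` is `(ẋ⁰)²` at the
-- points with `x⁰ = z` of the geodesic with initial data `(p, v)`, and `geodesicVelocityAB` is
-- its velocity there when `v` is causal.
def timeSpeedSqAB (a b : ℝ → ℝ) (p v : ℝ × ℝ) (z : ℝ) : ℝ :=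
  ((momentumAB b p v) ^ 2 / b z - energyAB a b p v) / a z

def geodesicVelocityAB (a b : ℝ → ℝ) (p v : ℝ × ℝ) (z : ℝ) : ℝ × ℝ :=
  (v.1 * √(timeSpeedSqAB a b p v z / v.1 ^ 2), momentumAB b p v / b z)

theorem continuous_geodesicVelocityAB (ha : Continuous a) (hb : Continuous b)
    (ha₀ : ∀ z, a z ≠ 0) (hb₀ : ∀ z, b z ≠ 0) (p v : ℝ × ℝ) :
    Continuous (geodesicVelocityAB a b p v) := by
  have hQ : Continuous (timeSpeedSqAB a b p v) :=
    ((continuous_const.div hb hb₀).sub continuous_const).div ha ha₀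
  exact (continuous_const.mul (hQ.div_const _).sqrt).prodMk (continuous_const.div hb hb₀)

namespace CausalVecAB

variable {p v : ℝ × ℝ}

theorem fst_ne_zero (hbpos : ∀ z, 0 < b z) (h : CausalVecAB a b p v) : v.1 ≠ 0 := by
  intro hv₁
  have hv₂ : v.2 ^ 2 ≤ 0 := by
    have := h.2
    rw [hv₁] at this
    nlinarith [hbpos p.1]
  exact h.1 (Prod.ext hv₁ (pow_eq_zero_iff two_ne_zero |>.1 (le_antisymm hv₂ (sq_nonneg _))))

theorem timeSpeedSqAB_pos (hapos : ∀ z, 0 < a z) (hbpos : ∀ z, 0 < b z)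
    (h : CausalVecAB a b p v) (z : ℝ) : 0 < timeSpeedSqAB a b p v z := by
  refine div_pos ?_ (hapos z)
  have hv₁ := h.fst_ne_zero hbpos
  have hE : energyAB a b p v ≤ 0 := h.2
  rcases hE.lt_or_eq with hE | hE
  · have : 0 ≤ momentumAB b p v ^ 2 / b z := div_nonneg (sq_nonneg _) (hbpos z).le
    linarith
  · have hv₂ : v.2 ≠ 0 := by
      rintro hv₂
      simp only [energyAB, hv₂] at hE
      have : 0 < a p.1 * v.1 ^ 2 := mul_pos (hapos _) (pow_two_pos_of_ne_zero hv₁)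
      linarith
    rw [hE, sub_zero]
    exact div_pos (pow_two_pos_of_ne_zero (mul_ne_zero (hbpos _).ne' hv₂)) (hbpos z)

theorem geodesicVelocityAB_fst_ne_zero (hapos : ∀ z, 0 < a z) (hbpos : ∀ z, 0 < b z)
    (h : CausalVecAB a b p v) (z : ℝ) : (geodesicVelocityAB a b p v z).1 ≠ 0 :=
  mul_ne_zero (h.fst_ne_zero hbpos) (Real.sqrt_ne_zero'.2
    (div_pos (h.timeSpeedSqAB_pos hapos hbpos z) (pow_two_pos_of_ne_zero (h.fst_ne_zero hbpos))))

end CausalVecAB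

namespace IsGeodesicAB

theorem derivWithin_eq_geodesicVelocityAB (ha : Differentiable ℝ a) (hb : Differentiable ℝ b)
    (hapos : ∀ z, 0 < a z) (hbpos : ∀ z, 0 < b z) (hab : t₀ < t₁)
    (hg : IsGeodesicAB a b γ (Icc t₀ t₁))
    (hcaus : CausalVecAB a b (γ t₀) (derivWithin γ (Icc t₀ t₁) t₀)) :
    ∀ s ∈ Icc t₀ t₁, derivWithin γ (Icc t₀ t₁) s
      = geodesicVelocityAB a b (γ t₀) (derivWithin γ (Icc t₀ t₁) t₀) (γ s).1 := by
  set I := Icc t₀ t₁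
  set p := γ t₀
  set v := derivWithin γ I t₀
  have ha₀ : ∀ z, a z ≠ 0 := fun z => (hapos z).ne'
  have hb₀ : ∀ z, b z ≠ 0 := fun z => (hbpos z).ne'
  have hmom := hg.momentumAB_eq hb hb₀ hab
  have hen := hg.energyAB_eq ha hb ha₀ hb₀ hab
  have hsnd : ∀ s ∈ I, (derivWithin γ I s).2 = momentumAB b p v / b (γ s).1 := fun s hs =>
    (eq_div_iff (hb₀ _)).2 ((mul_comm _ _).trans (hmom s hs))
  have hsq : ∀ s ∈ I, (derivWithin γ I s).1 ^ 2 = timeSpeedSqAB a b p v (γ s).1 := by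
    intro s hs
    have h := hen s hs
    rw [timeSpeedSqAB, ← h, energyAB, hsnd s hs, eq_div_iff (ha₀ _)]
    field_simp
    ring
  have hv₁ := hcaus.fst_ne_zero hbpos
  have hfst : EqOn (fun s => (derivWithin γ I s).1)
      (fun s => (geodesicVelocityAB a b p v (γ s).1).1) I := by
    refine isPreconnected_Icc.eq_of_sq_eq
      (continuous_fst.comp_continuousOn
        (hg.1.continuousOn_derivWithin (uniqueDiffOn_Icc hab) (by norm_num)))
      (continuous_fst.comp_continuousOn
        ((continuous_geodesicVelocityAB ha.continuous hb.continuous ha₀ hb₀ p v).comp_continuousOn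
          (continuous_fst.comp_continuousOn hg.1.continuousOn)))
      (fun s hs => ?_) (fun _ => hcaus.geodesicVelocityAB_fst_ne_zero hapos hbpos _)
      (left_mem_Icc.2 hab.le) ?_
    · have hQ := (hcaus.timeSpeedSqAB_pos hapos hbpos (γ s).1).le
      simp only [Pi.pow_apply, geodesicVelocityAB, hsq s hs, mul_pow,
        Real.sq_sqrt (div_nonneg hQ (sq_nonneg v.1))]
      field_simp
    · simp only [geodesicVelocityAB, ← hsq t₀ (left_mem_Icc.2 hab.le)]
      change v.1 = v.1 * √(v.1 ^ 2 / v.1 ^ 2)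
      rw [div_self (pow_ne_zero 2 hv₁), Real.sqrt_one, mul_one]
  exact fun s hs => Prod.ext (hfst hs) (hsnd s hs)

theorem eqOn_of_causalVecAB (ha : Differentiable ℝ a) (hb : Differentiable ℝ b)
    (hapos : ∀ z, 0 < a z) (hbpos : ∀ z, 0 < b z) (hab : t₀ < t₁) {γ₁ γ₂ : ℝ → ℝ × ℝ}
    (h₁ : IsGeodesicAB a b γ₁ (Icc t₀ t₁)) (h₂ : IsGeodesicAB a b γ₂ (Icc t₀ t₁))
    (hval : γ₁ t₀ = γ₂ t₀)
    (hder : derivWithin γ₁ (Icc t₀ t₁) t₀ = derivWithin γ₂ (Icc t₀ t₁) t₀)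
    (hcaus : CausalVecAB a b (γ₁ t₀) (derivWithin γ₁ (Icc t₀ t₁) t₀)) :
    EqOn γ₁ γ₂ (Icc t₀ t₁) := by
  have hV₁ := h₁.derivWithin_eq_geodesicVelocityAB ha hb hapos hbpos hab hcaus
  have hV₂ := h₂.derivWithin_eq_geodesicVelocityAB ha hb hapos hbpos hab (hval ▸ hder ▸ hcaus)
  rw [← hval, ← hder] at hV₂
  have hd : ∀ γ : ℝ → ℝ × ℝ, IsGeodesicAB a b γ (Icc t₀ t₁) →
      ∀ s ∈ Icc t₀ t₁, HasDerivWithinAt γ (derivWithin γ (Icc t₀ t₁) s) (Icc t₀ t₁) s :=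
    fun γ hγ s hs => (hγ.1.differentiableOn (by norm_num) s hs).hasDerivWithinAt
  have hx : EqOn (fun s => (γ₁ s).1) (fun s => (γ₂ s).1) (Icc t₀ t₁) :=
    eqOn_Icc_of_hasDerivWithinAt_comp
      (φ := fun z => (geodesicVelocityAB a b (γ₁ t₀) (derivWithin γ₁ (Icc t₀ t₁) t₀) z).1)
      (continuous_fst.comp (continuous_geodesicVelocityAB ha.continuous hb.continuous
        (fun z => (hapos z).ne') (fun z => (hbpos z).ne') _ _))
      (hcaus.geodesicVelocityAB_fst_ne_zero hapos hbpos)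
      (fun s hs => by rw [← hV₁ s hs]; exact (hd γ₁ h₁ s hs).fst)
      (fun s hs => by rw [← hV₂ s hs]; exact (hd γ₂ h₂ s hs).fst)
      (congrArg Prod.fst hval)
  refine eqOn_Icc_of_hasDerivWithinAt (hd γ₁ h₁) (fun s hs => ?_) hval
  rw [hV₁ s hs, show (γ₁ s).1 = (γ₂ s).1 from hx hs, ← hV₂ s hs]
  exact hd γ₂ h₂ s hs

theorem eqOn_right_of_eqOn_left (ha : Differentiable ℝ a) (hb : Differentiable ℝ b)
    (hapos : ∀ z, 0 < a z) (hbpos : ∀ z, 0 < b z) {γ σ : ℝ → ℝ × ℝ} {δ : ℝ} (hδ : 0 < δ)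
    (hγ : IsGeodesicAB a b γ (Icc (t₀ - δ) (t₀ + δ)))
    (hσ : IsGeodesicAB a b σ (Icc (t₀ - δ) (t₀ + δ)))
    (hleft : EqOn γ σ (Icc (t₀ - δ) t₀)) (hcaus : CausalVecAB a b (γ t₀) (deriv γ t₀)) :
    EqOn γ σ (Icc t₀ (t₀ + δ)) := by
  have hnhds : Icc (t₀ - δ) (t₀ + δ) ∈ 𝓝 t₀ := Icc_mem_nhds (by linarith) (by linarith)
  have hγd := (hγ.1.differentiableOn (by norm_num)).differentiableAt hnhds
  have hσd := (hσ.1.differentiableOn (by norm_num)).differentiableAt hnhds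
  have hder := deriv_eq_of_eventuallyEq_nhdsLE hγd hσd
    (eventuallyEq_of_mem (Icc_mem_nhdsLE (by linarith : t₀ - δ < t₀)) hleft)
  have hsub : Icc t₀ (t₀ + δ) ⊆ Icc (t₀ - δ) (t₀ + δ) := Icc_subset_Icc (by linarith) le_rfl
  have hJ := uniqueDiffOn_Icc (by linarith : t₀ < t₀ + δ)
  have hS := uniqueDiffOn_Icc (by linarith : t₀ - δ < t₀ + δ)
  have hJ₀ := hJ t₀ (left_mem_Icc.2 (by linarith))
  refine (hγ.mono hS hJ hsub).eqOn_of_causalVecAB ha hb hapos hbpos (by linarith)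
    (hσ.mono hS hJ hsub) (hleft (right_mem_Icc.2 (by linarith))) ?_ ?_
  · rw [hγd.derivWithin hJ₀, hσd.derivWithin hJ₀, hder]
  · rwa [hγd.derivWithin hJ₀]

end IsGeodesicAB

end

/-- Theorem A.2: the spacetime `(ℝ², −a(x⁰)(dx⁰)² + b(x⁰)(dx¹)²)` is causally
non-branching and non-intertwining. -/
theorem ab_causallyNonBranching_and_nonIntertwining
    (a b : ℝ → ℝ) (ha : ContDiff ℝ 1 a) (hb : ContDiff ℝ 1 b)
    (hapos : ∀ t, 0 < a t) (hbpos : ∀ t, 0 < b t) :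
    (∀ (γ : ℝ → ℝ × ℝ) (α β : ℝ), α < β →
      IsCausalGeodesicAB a b γ (Set.Icc α β) →
      ∀ t₀ ∈ Set.Ioo α β, ¬ BranchesAtAB a b γ α β t₀) ∧
    (∀ (p : ℝ × ℝ) (ε : ℝ), 0 < ε → ∀ γ₁ γ₂ : ℝ → ℝ × ℝ,
      IsCausalGeodesicAB a b γ₁ (Set.Icc 0 ε) →
      IsCausalGeodesicAB a b γ₂ (Set.Icc 0 ε) →
      γ₁ 0 = p → γ₂ 0 = p →
      derivWithin γ₁ (Set.Icc 0 ε) 0 = derivWithin γ₂ (Set.Icc 0 ε) 0 →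
      (∀ t ∈ Set.Icc (0:ℝ) ε, γ₁ t = γ₂ t) ∨
        ¬ ∃ z : ℝ × ℝ, AccPt z (Filter.principal
          ((γ₁ '' Set.Ioc 0 ε) ∩ (γ₂ '' Set.Ioc 0 ε)))) := by
  have ha' : Differentiable ℝ a := ha.differentiable one_ne_zero
  have hb' : Differentiable ℝ b := hb.differentiable one_ne_zero
  refine ⟨?_, fun p ε hε γ₁ γ₂ h₁ h₂ hp₁ hp₂ hder => Or.inl ?_⟩
  · rintro γ α β hαβ hγ t₀ ⟨hαt₀, ht₀β⟩ ⟨ε, hε, hαε, hεβ, σ, hσ, hleft, hdisj⟩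
    have hU := uniqueDiffOn_Icc (by linarith : t₀ - ε / 2 < t₀ + ε / 2)
    have hγ' := hγ.1.mono (uniqueDiffOn_Icc hαβ) hU (Icc_subset_Icc (by linarith) (by linarith))
    have hσ' := hσ.mono isOpen_Ioo.uniqueDiffOn hU (Icc_subset_Ioo (by linarith) (by linarith))
    have hcaus : CausalVecAB a b (γ t₀) (deriv γ t₀) := by
      simpa only [derivWithin_of_mem_nhds (Icc_mem_nhds hαt₀ ht₀β)]
        using hγ.2 t₀ ⟨hαt₀.le, ht₀β.le⟩
    have heq := hγ'.eqOn_right_of_eqOn_left ha' hb' hapos hbpos (half_pos hε) hσ'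
      (fun t ht => hleft t ⟨by linarith [ht.1], ht.2⟩) hcaus
    have ht : t₀ + ε / 4 ∈ Ioo t₀ (t₀ + ε) := ⟨by linarith, by linarith⟩
    exact eq_empty_iff_forall_notMem.1 hdisj _
      ⟨⟨_, ht, rfl⟩, ⟨_, ht, (heq ⟨by linarith, by linarith⟩).symm⟩⟩
  · exact h₁.1.eqOn_of_causalVecAB ha' hb' hapos hbpos hε h₂.1 (hp₁.trans hp₂.symm) hder
      (h₁.2 0 (left_mem_Icc.2 hε.le))
end
end
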